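/- arXiv:2401.03861 — 6 statements merged into one kernel-verified Lean document; each statement's English description precedes it below -/
import Mathlib

section
/- A matroid congestion game (N, E, (𝒮_i)_{i∈N}, (c_e)_{e∈E}, g) with set-functional costs and complementarities has a pure Nash equilibrium if the aggregation function g : ℝ₊^r → ℝ is symmetric and weakly monotone and the cost function c_e : 2^N → ℝ₊ is monotonically nondecreasing with respect to g for each resource e ∈ E. -/
open Finset

/-- A matroid on the (finite) ground set `E`, given by its base family `B`:
a nonempty family of finite subsets of `E` satisfying the exchange axiom (EX). -/
def IsBaseFamily {E : Type*} [DecidableEq E] (B : Finset (Finset E)) : Prop :=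
  B.Nonempty ∧
    ∀ S ∈ B, ∀ S' ∈ B, ∀ e ∈ S \ S',
      ∃ f ∈ S' \ S, insert f (S.erase e) ∈ B

/-- The set `N_e(σ)` of players choosing resource `e` in the strategy profile `σ`. -/
def playersOn {N E : Type*} [Fintype N] [DecidableEq E]
    (σ : N → Finset E) (e : E) : Finset N :=
  Finset.univ.filter (fun i => e ∈ σ i)

/-- An aggregation function `g : ℝ₊^{r+1} → ℝ` is symmetric if its value does not
depend on the order of its arguments. -/
def SymmetricAgg {r : ℕ} (g : (Fin (r + 1) → NNReal) → ℝ) : Prop :=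
  ∀ (v : Fin (r + 1) → NNReal) (π : Equiv.Perm (Fin (r + 1))), g (v ∘ π) = g v

/-- An aggregation function `g : ℝ₊^{r+1} → ℝ` is weakly monotone if for all
`x, y ∈ ℝ₊`, either `g(v', x) ≤ g(v', y)` for all `v' ∈ ℝ₊^r`, or
`g(v', x) ≥ g(v', y)` for all `v' ∈ ℝ₊^r`. -/
def WeaklyMonotone {r : ℕ} (g : (Fin (r + 1) → NNReal) → ℝ) : Prop :=
  ∀ x y : NNReal,
    (∀ v : Fin r → NNReal, g (Fin.snoc v x) ≤ g (Fin.snoc v y)) ∨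
    (∀ v : Fin r → NNReal, g (Fin.snoc v y) ≤ g (Fin.snoc v x))

/-- A cost function `c : 2^N → ℝ₊` is monotonically nondecreasing with respect to
the aggregation function `g` if `X ⊆ Y` implies `g(v', c(X)) ≤ g(v', c(Y))` for
every `v' ∈ ℝ₊^r`. -/
def MonotoneWrt {r : ℕ} {N : Type*} (g : (Fin (r + 1) → NNReal) → ℝ)
    (c : Finset N → NNReal) : Prop :=
  ∀ X Y : Finset N, X ⊆ Y →
    ∀ v : Fin r → NNReal, g (Fin.snoc v (c X)) ≤ g (Fin.snoc v (c Y))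

/-- The cost `γ_i(σ) = g(c_{e_1}(N_{e_1}(σ)), …, c_{e_{r+1}}(N_{e_{r+1}}(σ)))` imposed
on player `i` in a congestion game with set-functional costs and complementarities,
where `σ i = {e_1, …, e_{r+1}}`. (If `σ i` does not have exactly `r + 1` elements
the value is irrelevant and set to `0`.) -/
noncomputable def aggCost {N E : Type*} [Fintype N] [DecidableEq E] {r : ℕ}
    (g : (Fin (r + 1) → NNReal) → ℝ) (c : E → Finset N → NNReal)
    (σ : N → Finset E) (i : N) : ℝ :=
  if h : (σ i).toList.length = r + 1 then
    g (fun j => c ((σ i).toList.get (Fin.cast h.symm j))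
          (playersOn σ ((σ i).toList.get (Fin.cast h.symm j))))
  else 0



/-- The total preorder on values induced by `g`. -/
def LeG {r : ℕ} (g : (Fin (r + 1) → NNReal) → ℝ) (x y : NNReal) : Prop :=
  ∀ v : Fin r → NNReal, g (Fin.snoc v x) ≤ g (Fin.snoc v y)

lemma leG_refl {r : ℕ} (g : (Fin (r + 1) → NNReal) → ℝ) (x : NNReal) : LeG g x x :=
  fun _ => le_rfl

lemma leG_trans {r : ℕ} {g : (Fin (r + 1) → NNReal) → ℝ} {x y z : NNReal}
    (h1 : LeG g x y) (h2 : LeG g y z) : LeG g x z :=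
  fun v => (h1 v).trans (h2 v)

open Classical in
/-- rank of a value among a finite reference set `V`. -/
noncomputable def rankIn {r : ℕ} (g : (Fin (r + 1) → NNReal) → ℝ)
    (V : Finset NNReal) (x : NNReal) : ℕ :=
  (V.filter fun y => ¬ LeG g x y).card

lemma rankIn_mono {r : ℕ} {g : (Fin (r + 1) → NNReal) → ℝ} (V : Finset NNReal)
    {x y : NNReal} (h : LeG g x y) : rankIn g V x ≤ rankIn g V y := by
  classical
  apply Finset.card_le_card
  intro z hz
  rw [Finset.mem_filter] at hz ⊢
  refine ⟨hz.1, fun hyz => hz.2 (leG_trans h hyz)⟩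

lemma rankIn_strict {r : ℕ} {g : (Fin (r + 1) → NNReal) → ℝ}
    (hwm : ∀ x y : NNReal, LeG g x y ∨ LeG g y x) (V : Finset NNReal)
    {x y : NNReal} (hx : x ∈ V) (h : ¬ LeG g y x) : rankIn g V x < rankIn g V y := by
  classical
  have hxy : LeG g x y := (hwm x y).resolve_right (fun h' => h h')
  apply Finset.card_lt_card
  constructor
  · intro z hz
    rw [Finset.mem_filter] at hz ⊢
    refine ⟨hz.1, fun hyz => hz.2 (leG_trans hxy hyz)⟩
  · intro hsub
    have hxmem : x ∈ V.filter fun z => ¬ LeG g y z := by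
      rw [Finset.mem_filter]; exact ⟨hx, h⟩
    have := hsub hxmem
    rw [Finset.mem_filter] at this
    exact this.2 (leG_refl g x)

lemma leG_of_rank_le {r : ℕ} {g : (Fin (r + 1) → NNReal) → ℝ}
    (hwm : ∀ x y : NNReal, LeG g x y ∨ LeG g y x) (V : Finset NNReal)
    {x y : NNReal} (hy : y ∈ V) (h : rankIn g V x ≤ rankIn g V y) : LeG g x y := by
  by_contra hne
  exact absurd h (not_le.mpr (rankIn_strict hwm V hy hne))

lemma comp_swap_eq_snoc {r : ℕ} (a : Fin (r + 1) → NNReal) (j0 : Fin (r + 1)) :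
    a ∘ (Equiv.swap j0 (Fin.last r)) =
      Fin.snoc (fun k : Fin r => a (Equiv.swap j0 (Fin.last r) k.castSucc)) (a j0) := by
  funext j
  refine Fin.lastCases ?_ ?_ j
  · simp [Fin.snoc_last, Equiv.swap_apply_right]
  · intro k
    simp [Fin.snoc_castSucc]

lemma swap_castSucc_ne {r : ℕ} (j0 : Fin (r + 1)) (k : Fin r) :
    Equiv.swap j0 (Fin.last r) k.castSucc ≠ j0 := by
  intro h
  have : (k.castSucc : Fin (r + 1)) = Equiv.swap j0 (Fin.last r) j0 := by
    apply_fun (Equiv.swap j0 (Fin.last r)) at h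
    · rwa [Equiv.swap_apply_self] at h
  rw [Equiv.swap_apply_left] at this
  exact absurd this (Fin.ne_of_lt (Fin.castSucc_lt_last k))

lemma g_le_of_single {r : ℕ} {g : (Fin (r + 1) → NNReal) → ℝ} (hsym : SymmetricAgg g)
    {a b : Fin (r + 1) → NNReal} (j0 : Fin (r + 1))
    (hab : ∀ j, j ≠ j0 → a j = b j) (h : LeG g (a j0) (b j0)) : g a ≤ g b := by
  set π := Equiv.swap j0 (Fin.last r) with hπ
  have ha := comp_swap_eq_snoc a j0
  have hb := comp_swap_eq_snoc b j0
  have hw : (fun k : Fin r => a (π k.castSucc)) = (fun k : Fin r => b (π k.castSucc)) := by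
    funext k
    exact hab _ (swap_castSucc_ne j0 k)
  calc g a = g (a ∘ π) := (hsym a π).symm
    _ = g (Fin.snoc (fun k : Fin r => a (π k.castSucc)) (a j0)) := by rw [ha]
    _ ≤ g (Fin.snoc (fun k : Fin r => a (π k.castSucc)) (b j0)) := h _
    _ = g (b ∘ π) := by rw [hb, hw]
    _ = g b := hsym b π

lemma g_le_of_pointwise {r : ℕ} {g : (Fin (r + 1) → NNReal) → ℝ} (hsym : SymmetricAgg g)
    {u v : Fin (r + 1) → NNReal} (h : ∀ j, LeG g (u j) (v j)) : g u ≤ g v := by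
  have key : ∀ k : ℕ, k ≤ r + 1 → g u ≤ g (fun j => if (j : ℕ) < k then v j else u j) := by
    intro k
    induction k with
    | zero => intro _; simp
    | succ k ih =>
      intro hk
      have hk' : k ≤ r + 1 := Nat.le_of_succ_le hk
      refine (ih hk').trans ?_
      have hkr : k < r + 1 := hk
      set j0 : Fin (r + 1) := ⟨k, hkr⟩ with hj0
      apply g_le_of_single hsym j0
      · intro j hj
        have hjk : (j : ℕ) ≠ k := by
          intro hh; exact hj (Fin.ext hh)
        by_cases hlt : (j : ℕ) < k
        · simp [hlt, Nat.lt_succ_of_lt hlt]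
        · have : ¬ (j : ℕ) < k + 1 := by omega
          simp [hlt, this]
      · have h1 : ¬ ((j0 : ℕ) < k) := by simp [hj0]
        have h2 : (j0 : ℕ) < k + 1 := by simp [hj0]
        simpa [h1, h2] using h j0
  have := key (r + 1) le_rfl
  have heq : (fun j : Fin (r + 1) => if (j : ℕ) < r + 1 then v j else u j) = v := by
    funext j; simp [j.isLt]
  rwa [heq] at this

lemma filter_comp_perm_card {m : ℕ} (π : Equiv.Perm (Fin m)) (p : Fin m → Prop)
    [DecidablePred p] :
    (univ.filter fun j => p (π j)).card = (univ.filter p).card := by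
  apply Finset.card_bij (fun j _ => π j)
  · intro j hj
    rw [mem_filter] at hj ⊢
    exact ⟨mem_univ _, hj.2⟩
  · intro j1 h1 j2 h2 h
    exact π.injective h
  · intro x hx
    rw [mem_filter] at hx
    exact ⟨π.symm x, by rw [mem_filter]; simpa using hx.2, by simp⟩

lemma exists_perm_of_counts {m : ℕ} (a b : Fin m → ℕ)
    (h : ∀ t, (univ.filter fun j => b j ≤ t).card ≤ (univ.filter fun j => a j ≤ t).card) :
    ∃ ψ : Equiv.Perm (Fin m), ∀ j, a (ψ j) ≤ b j := by
  classical
  set πa := Tuple.sort a with hπa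
  set πb := Tuple.sort b with hπb
  have hma := Tuple.monotone_sort a
  have hmb := Tuple.monotone_sort b
  have hkey : ∀ k, a (πa k) ≤ b (πb k) := by
    intro k
    by_contra hlt
    push_neg at hlt
    set t := b (πb k) with ht
    have h1 : k + 1 ≤ (univ.filter fun j => b j ≤ t).card := by
      rw [← filter_comp_perm_card πb]
      have hsub : Finset.Iic k ⊆ univ.filter fun j => b (πb j) ≤ t := by
        intro j hj
        rw [mem_filter]
        exact ⟨mem_univ _, hmb (Finset.mem_Iic.mp hj)⟩
      calc k + 1 = (Finset.Iic k).card := by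
              rw [Fin.card_Iic]
        _ ≤ _ := Finset.card_le_card hsub
    have h2 : (univ.filter fun j => a j ≤ t).card ≤ k := by
      rw [← filter_comp_perm_card πa]
      have hsub : (univ.filter fun j => a (πa j) ≤ t) ⊆ Finset.Iio k := by
        intro j hj
        rw [mem_filter] at hj
        rw [Finset.mem_Iio]
        by_contra hge
        push_neg at hge
        have h3 : a (πa k) ≤ a (πa j) := hma hge
        have h4 := hj.2
        omega
      calc _ ≤ (Finset.Iio k).card := Finset.card_le_card hsub
        _ ≤ k := by simp [Fin.card_Iio]
    have := h t
    omega
  refine ⟨πb.symm.trans πa, fun j => ?_⟩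
  have := hkey (πb.symm j)
  simpa using this

lemma card_filter_toList {E : Type*} [DecidableEq E] (S : Finset E) {m : ℕ}
    (hm : S.toList.length = m) (p : E → Prop) [DecidablePred p] :
    (univ.filter fun j : Fin m => p (S.toList.get (Fin.cast hm.symm j))).card
      = (S.filter p).card := by
  classical
  apply Finset.card_bij (fun j _ => S.toList.get (Fin.cast hm.symm j))
  · intro j hj
    rw [mem_filter] at hj ⊢
    exact ⟨Finset.mem_toList.mp (List.get_mem _ _), hj.2⟩
  · intro j1 h1 j2 h2 hEq
    have hnd := S.nodup_toList
    have := (List.Nodup.get_inj_iff hnd).mp hEq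
    have : (j1 : ℕ) = (j2 : ℕ) := by
      simpa [Fin.ext_iff] using this
    exact Fin.ext this
  · intro x hx
    rw [mem_filter] at hx
    obtain ⟨n, hn⟩ := List.mem_iff_get.mp (Finset.mem_toList.mpr hx.1)
    refine ⟨Fin.cast hm n, ?_, ?_⟩
    · rw [mem_filter]
      refine ⟨mem_univ _, ?_⟩
      have : Fin.cast hm.symm (Fin.cast hm n) = n := by
        apply Fin.ext; simp
      rw [this, hn]
      exact hx.2
    · have : Fin.cast hm.symm (Fin.cast hm n) = n := by
        apply Fin.ext; simp
      rw [this, hn]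

lemma matroid_counting {E : Type*} [DecidableEq E] {B : Finset (Finset E)} {r : ℕ}
    (hex : ∀ S ∈ B, ∀ S' ∈ B, ∀ e ∈ S \ S', ∃ f ∈ S' \ S, insert f (S.erase e) ∈ B)
    (hcardB : ∀ S ∈ B, S.card = r + 1)
    (ρ : E → ℕ) {S : Finset E} (hS : S ∈ B)
    (hopt : ∀ e ∈ S, ∀ f, insert f (S.erase e) ∈ B → f ∉ S → ρ e ≤ ρ f) :
    ∀ T ∈ B, ∀ t, (T.filter fun x => ρ x ≤ t).card ≤ (S.filter fun x => ρ x ≤ t).card := by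
  classical
  suffices H : ∀ n : ℕ, ∀ T ∈ B, (T \ S).card = n →
      ∀ t, (T.filter fun x => ρ x ≤ t).card ≤ (S.filter fun x => ρ x ≤ t).card by
    exact fun T hT t => H _ T hT rfl t
  intro n
  induction n using Nat.strong_induction_on with
  | _ n ih =>
    intro T hT hTn t
    by_cases h0 : T \ S = ∅
    · have hTS : T = S := by
        apply Finset.eq_of_subset_of_card_le (Finset.sdiff_eq_empty_iff_subset.mp h0)
        rw [hcardB S hS, hcardB T hT]
      rw [hTS]
    · by_cases hA : ∃ f ∈ T \ S, t < ρ f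
      · obtain ⟨f, hf, hft⟩ := hA
        obtain ⟨e, he, hT'⟩ := hex T hT S hS f hf
        set T' := insert e (T.erase f) with hT'def
        have heS : e ∈ S := (Finset.mem_sdiff.mp he).1
        have heT : e ∉ T := (Finset.mem_sdiff.mp he).2
        have hfT : f ∈ T := (Finset.mem_sdiff.mp hf).1
        have hfS : f ∉ S := (Finset.mem_sdiff.mp hf).2
        have hT'S : T' \ S = (T \ S).erase f := by
          ext x
          simp only [hT'def, Finset.mem_sdiff, Finset.mem_insert, Finset.mem_erase]
          constructor
          · rintro ⟨hx1 | hx2, hx3⟩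
            · exact absurd (hx1 ▸ heS) hx3
            · exact ⟨hx2.1, hx2.2, hx3⟩
          · rintro ⟨hx1, hx2, hx3⟩
            exact ⟨Or.inr ⟨hx1, hx2⟩, hx3⟩
        have hlt : (T' \ S).card < n := by
          rw [hT'S, Finset.card_erase_of_mem hf, hTn]
          have : 0 < (T \ S).card := Finset.card_pos.mpr (Finset.nonempty_iff_ne_empty.mpr h0)
          omega
        have step : (T.filter fun x => ρ x ≤ t).card ≤ (T'.filter fun x => ρ x ≤ t).card := by
          apply Finset.card_le_card
          intro x hx
          rw [Finset.mem_filter] at hx ⊢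
          refine ⟨?_, hx.2⟩
          have hxf : x ≠ f := by
            intro hxf
            rw [hxf] at hx
            omega
          exact Finset.mem_insert_of_mem (Finset.mem_erase.mpr ⟨hxf, hx.1⟩)
        exact step.trans (ih _ hlt T' hT' rfl t)
      · push_neg at hA
        by_cases hB2 : ∃ e ∈ S \ T, t < ρ e
        · obtain ⟨e, he, het⟩ := hB2
          obtain ⟨f, hf, hSw⟩ := hex S hS T hT e he
          have h1 := hopt e (Finset.mem_sdiff.mp he).1 f hSw
            (fun hfS => (Finset.mem_sdiff.mp hf).2 hfS)
          have h2 := hA f (Finset.mem_sdiff.mpr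
            ⟨(Finset.mem_sdiff.mp hf).1, (Finset.mem_sdiff.mp hf).2⟩)
          omega
        · push_neg at hB2
          have key : ∀ A C : Finset E,
              (A.filter fun x => ρ x ≤ t).card
                = ((A ∩ C).filter fun x => ρ x ≤ t).card
                  + ((A \ C).filter fun x => ρ x ≤ t).card := by
            intro A C
            rw [← Finset.card_union_of_disjoint, ← Finset.filter_union]
            · congr 1
              ext x
              simp only [Finset.mem_filter, Finset.mem_union, Finset.mem_inter, Finset.mem_sdiff]
              tauto
            · rw [Finset.disjoint_left]
              intro x hx1 hx2
              rw [Finset.mem_filter, Finset.mem_inter] at hx1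
              rw [Finset.mem_filter, Finset.mem_sdiff] at hx2
              exact hx2.1.2 hx1.1.2
          have hTt : ((T \ S).filter fun x => ρ x ≤ t) = T \ S :=
            Finset.filter_true_of_mem hA
          have hSt : ((S \ T).filter fun x => ρ x ≤ t) = S \ T :=
            Finset.filter_true_of_mem hB2
          have hcards : (T \ S).card = (S \ T).card := by
            have h1 := Finset.card_sdiff_add_card_inter T S
            have h2 := Finset.card_sdiff_add_card_inter S T
            rw [hcardB T hT] at h1
            rw [hcardB S hS] at h2
            rw [Finset.inter_comm] at h2
            omega
          have e1 := key T S
          have e2 := key S T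
          rw [hTt] at e1
          rw [hSt] at e2
          rw [Finset.inter_comm] at e2
          omega

lemma mem_playersOn {N E : Type*} [Fintype N] [DecidableEq E]
    (σ : N → Finset E) (e : E) (j : N) : j ∈ playersOn σ e ↔ e ∈ σ j := by
  simp [playersOn]

lemma playersOn_update_mem {N E : Type*} [Fintype N] [DecidableEq N] [DecidableEq E]
    (σ : N → Finset E) (i : N) (T : Finset E) (e : E) (he : e ∈ T) :
    playersOn (Function.update σ i T) e = insert i ((playersOn σ e).erase i) := by
  ext j
  rw [mem_playersOn, Finset.mem_insert, Finset.mem_erase, mem_playersOn]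
  by_cases hj : j = i
  · subst hj; simp [he]
  · simp [Function.update_of_ne hj, hj]

lemma playersOn_update_not_mem {N E : Type*} [Fintype N] [DecidableEq N] [DecidableEq E]
    (σ : N → Finset E) (i : N) (T : Finset E) (e : E) (he : e ∉ T) :
    playersOn (Function.update σ i T) e = (playersOn σ e).erase i := by
  ext j
  rw [mem_playersOn, Finset.mem_erase, mem_playersOn]
  by_cases hj : j = i
  · subst hj; simp [he]
  · simp [Function.update_of_ne hj, hj]

lemma aggCost_eq_g {N E : Type*} [Fintype N] [DecidableEq E] {r : ℕ}
    (g : (Fin (r + 1) → NNReal) → ℝ) (c : E → Finset N → NNReal)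
    (σ : N → Finset E) (i : N) (h : (σ i).toList.length = r + 1)
    (u : Fin (r + 1) → NNReal)
    (hu : ∀ j, c ((σ i).toList.get (Fin.cast h.symm j))
        (playersOn σ ((σ i).toList.get (Fin.cast h.symm j))) = u j) :
    aggCost g c σ i = g u := by
  rw [aggCost, dif_pos h]
  congr 1
  exact funext hu


/-- A matroid congestion game with set-functional costs and complementarities has a
pure Nash equilibrium if the aggregation function `g` is symmetric and weakly
monotone and each cost function `c_e` is monotonically nondecreasing w.r.t. `g`. -/
theorem matroid_congestion_game_set_functional_complementarities_has_PNE
    {N E : Type*} [Fintype N] [DecidableEq N] [Fintype E] [DecidableEq E] {r : ℕ}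
    (𝒮 : N → Finset (Finset E)) (hmatroid : ∀ i, IsBaseFamily (𝒮 i))
    (hcard : ∀ i, ∀ S ∈ 𝒮 i, S.card = r + 1)
    (g : (Fin (r + 1) → NNReal) → ℝ) (hsym : SymmetricAgg g) (hwm : WeaklyMonotone g)
    (c : E → Finset N → NNReal) (hc : ∀ e, MonotoneWrt g (c e)) :
    ∃ σ : N → Finset E, (∀ i, σ i ∈ 𝒮 i) ∧
      ∀ i : N, ∀ S' ∈ 𝒮 i,
        aggCost g c σ i ≤ aggCost g c (Function.update σ i S') i := by
  classical
  have hwm' : ∀ x y : NNReal, LeG g x y ∨ LeG g y x := hwm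
  set V : Finset NNReal := Finset.image (fun p : E × Finset N => c p.1 p.2) Finset.univ
    with hVdef
  set M : ℕ := Fintype.card N + 1 with hMdef
  set F : (N → Finset E) → E → ℕ :=
    fun τ' x => (playersOn τ' x).card * M ^ (rankIn g V (c x (playersOn τ' x))) with hFdef
  set Φ : (N → Finset E) → ℕ := fun τ' => ∑ x : E, F τ' x with hΦdef
  have hne : (Finset.univ.filter fun τ' : N → Finset E => ∀ i, τ' i ∈ 𝒮 i).Nonempty := by
    refine ⟨fun i => (hmatroid i).1.choose, ?_⟩
    rw [Finset.mem_filter]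
    exact ⟨Finset.mem_univ _, fun i => (hmatroid i).1.choose_spec⟩
  obtain ⟨σ, hσmem, hσmin⟩ := Finset.exists_min_image _ Φ hne
  have hσS : ∀ i, σ i ∈ 𝒮 i := (Finset.mem_filter.mp hσmem).2
  refine ⟨σ, hσS, ?_⟩
  intro i T hT
  by_contra hdev
  push_neg at hdev
  have hScard : (σ i).card = r + 1 := hcard i _ (hσS i)
  have hTcard : T.card = r + 1 := hcard i T hT
  set w : E → NNReal := fun e => c e (insert i ((playersOn σ e).erase i)) with hwdef
  have hwV : ∀ e, w e ∈ V := by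
    intro e
    rw [hVdef]
    exact Finset.mem_image.mpr
      ⟨(e, insert i ((playersOn σ e).erase i)), Finset.mem_univ _, rfl⟩
  set ρ : E → ℕ := fun e => rankIn g V (w e) with hρdef
  -- tuple for the current strategy
  have hlenS : (σ i).toList.length = r + 1 := by rw [Finset.length_toList, hScard]
  set LS : Fin (r + 1) → E := fun j => (σ i).toList.get (Fin.cast hlenS.symm j) with hLSdef
  have hLSmem : ∀ j, LS j ∈ σ i := fun j => Finset.mem_toList.mp (List.get_mem _ _)
  have hcurr : aggCost g c σ i = g (fun j => w (LS j)) := by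
    apply aggCost_eq_g g c σ i hlenS
    intro j
    show c (LS j) (playersOn σ (LS j)) = w (LS j)
    simp only [hwdef]
    rw [Finset.insert_erase ((mem_playersOn σ _ i).mpr (hLSmem j))]
  -- tuple for the deviation
  set τ : N → Finset E := Function.update σ i T with hτdef
  have hτi : τ i = T := Function.update_self i T σ
  have hlenT : (τ i).toList.length = r + 1 := by rw [Finset.length_toList, hτi, hTcard]
  set LT : Fin (r + 1) → E := fun j => (τ i).toList.get (Fin.cast hlenT.symm j) with hLTdef
  have hLTmem : ∀ j, LT j ∈ T := by
    intro j
    have h1 : LT j ∈ τ i := Finset.mem_toList.mp (List.get_mem _ _)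
    rwa [hτi] at h1
  have hdevg : aggCost g c τ i = g (fun j => w (LT j)) := by
    apply aggCost_eq_g g c τ i hlenT
    intro j
    show c (LT j) (playersOn τ (LT j)) = w (LT j)
    rw [hτdef, playersOn_update_mem σ i T _ (hLTmem j)]
  -- the current strategy is not swap-optimal
  have hnotopt : ¬ (∀ e ∈ σ i, ∀ f, insert f ((σ i).erase e) ∈ 𝒮 i → f ∉ σ i →
      ρ e ≤ ρ f) := by
    intro hopt
    have hcnt := matroid_counting (hmatroid i).2 (hcard i) ρ (hσS i) hopt T hT
    have hcounts : ∀ t, (Finset.univ.filter fun j : Fin (r + 1) => ρ (LT j) ≤ t).card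
        ≤ (Finset.univ.filter fun j : Fin (r + 1) => ρ (LS j) ≤ t).card := by
      intro t
      have h1 : (Finset.univ.filter fun j : Fin (r + 1) => ρ (LT j) ≤ t).card
          = ((τ i).filter fun x => ρ x ≤ t).card :=
        card_filter_toList (τ i) hlenT (fun x => ρ x ≤ t)
      have h2 : (Finset.univ.filter fun j : Fin (r + 1) => ρ (LS j) ≤ t).card
          = ((σ i).filter fun x => ρ x ≤ t).card :=
        card_filter_toList (σ i) hlenS (fun x => ρ x ≤ t)
      rw [h1, h2, hτi]
      exact hcnt t
    obtain ⟨ψ, hψ⟩ := exists_perm_of_counts _ _ hcounts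
    have hpt : ∀ j, LeG g (w (LS (ψ j))) (w (LT j)) := by
      intro j
      exact leG_of_rank_le hwm' V (hwV (LT j)) (hψ j)
    have hle : g (fun j => w (LS j)) ≤ g (fun j => w (LT j)) :=
      calc g (fun j => w (LS j)) = g ((fun j => w (LS j)) ∘ ψ) := (hsym _ ψ).symm
        _ ≤ g (fun j => w (LT j)) := g_le_of_pointwise hsym hpt
    rw [hcurr, hdevg] at hdev
    exact absurd hle (not_le.mpr hdev)
  push_neg at hnotopt
  obtain ⟨e, heS, f, hswap, hfS, hfe⟩ := hnotopt
  -- Φ strictly decreases by performing the swap, contradiction with minimality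
  set S' : Finset E := insert f ((σ i).erase e) with hS'def
  set σ'' : N → Finset E := Function.update σ i S' with hσ''def
  have hfmem : f ∈ S' := Finset.mem_insert_self f _
  have hef : e ≠ f := fun h => hfS (h ▸ heS)
  have heS' : e ∉ S' := by
    rw [hS'def, Finset.mem_insert]
    push_neg
    exact ⟨hef, Finset.notMem_erase e _⟩
  set X : Finset N := playersOn σ e with hXdef
  set Y : Finset N := playersOn σ f with hYdef
  have hiX : i ∈ X := by rw [hXdef]; exact (mem_playersOn σ e i).mpr heS
  have hiY : i ∉ Y := by
    rw [hYdef]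
    intro h
    exact hfS ((mem_playersOn σ f i).mp h)
  have hXe : playersOn σ'' e = X.erase i := by
    rw [hσ''def, hXdef]
    exact playersOn_update_not_mem σ i S' e heS'
  have hYf : playersOn σ'' f = insert i Y := by
    rw [hσ''def, hYdef, playersOn_update_mem σ i S' f hfmem,
      Finset.erase_eq_of_notMem hiY]
  have hother : ∀ x, x ≠ e → x ≠ f → playersOn σ'' x = playersOn σ x := by
    intro x hxe hxf
    rw [hσ''def]
    ext j
    rw [mem_playersOn, mem_playersOn]
    by_cases hj : j = i
    · subst hj
      rw [Function.update_self, hS'def]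
      simp [Finset.mem_insert, Finset.mem_erase, hxf, hxe]
    · rw [Function.update_of_ne hj]
  have hwe : w e = c e X := by
    simp only [hwdef, hXdef]
    rw [Finset.insert_erase hiX]
  have hwf : w f = c f (insert i Y) := by
    simp only [hwdef, hYdef]
    rw [Finset.erase_eq_of_notMem hiY]
  have hr1 : rankIn g V (c e (X.erase i)) ≤ ρ e := by
    have h1 : LeG g (c e (X.erase i)) (c e X) := hc e (X.erase i) X (Finset.erase_subset i X)
    have h2 := rankIn_mono V h1
    rw [hρdef]
    simp only []
    rw [hwe]
    exact h2
  have hcX : 1 ≤ X.card := Finset.card_pos.mpr ⟨i, hiX⟩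
  have hYcard : Y.card + 1 ≤ Fintype.card N := by
    have hsub : Y ⊆ Finset.univ.erase i := by
      intro j hj
      exact Finset.mem_erase.mpr ⟨fun hji => hiY (hji ▸ hj), Finset.mem_univ _⟩
    have h2 := Finset.card_le_card hsub
    rw [Finset.card_erase_of_mem (Finset.mem_univ i), Finset.card_univ] at h2
    have hN : 1 ≤ Fintype.card N := Fintype.card_pos_iff.mpr ⟨i⟩
    omega
  have hsplit : ∀ τ' : N → Finset E,
      Φ τ' = F τ' e + (F τ' f + ∑ x ∈ (Finset.univ.erase e).erase f, F τ' x) := by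
    intro τ'
    show ∑ x : E, F τ' x = _
    rw [← Finset.add_sum_erase Finset.univ (F τ') (Finset.mem_univ e)]
    congr 1
    rw [← Finset.add_sum_erase (Finset.univ.erase e) (F τ')
      (Finset.mem_erase.mpr ⟨Ne.symm hef, Finset.mem_univ f⟩)]
  have hrest : ∀ x ∈ (Finset.univ.erase e).erase f, F σ'' x = F σ x := by
    intro x hx
    obtain ⟨hxf, hx2⟩ := Finset.mem_erase.mp hx
    obtain ⟨hxe, _⟩ := Finset.mem_erase.mp hx2
    simp only [hFdef, hother x hxe hxf]
  have hFe'' : F σ'' e ≤ (X.card - 1) * M ^ (ρ e) := by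
    simp only [hFdef]
    rw [hXe, Finset.card_erase_of_mem hiX]
    exact Nat.mul_le_mul_left _ (Nat.pow_le_pow_right (by omega) hr1)
  have hFf'' : F σ'' f = (Y.card + 1) * M ^ (ρ f) := by
    simp only [hFdef]
    rw [hYf, Finset.card_insert_of_notMem hiY]
    have h1 : c f (insert i Y) = w f := hwf.symm
    rw [h1]
  have hFe : F σ e = X.card * M ^ (ρ e) := by
    simp only [hFdef]
    rw [← hXdef, ← hwe]
  have hpow : (Y.card + 1) * M ^ (ρ f) < M ^ (ρ e) := by
    have hMpos : 0 < M ^ (ρ f) := Nat.pow_pos (by omega)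
    have hYM : Y.card + 1 < M := by omega
    have h1 : (Y.card + 1) * M ^ (ρ f) < M * M ^ (ρ f) := by
      exact Nat.mul_lt_mul_of_lt_of_le hYM le_rfl hMpos
    have h2 : M * M ^ (ρ f) = M ^ (ρ f + 1) := by
      rw [pow_succ, Nat.mul_comm]
    have h3 : M ^ (ρ f + 1) ≤ M ^ (ρ e) := Nat.pow_le_pow_right (by omega) (by omega)
    omega
  have hkey : F σ'' e + F σ'' f < F σ e + F σ f := by
    have h1 : F σ'' e + F σ'' f ≤ (X.card - 1) * M ^ (ρ e) + (Y.card + 1) * M ^ (ρ f) :=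
      Nat.add_le_add hFe'' (le_of_eq hFf'')
    have h2 : (X.card - 1) * M ^ (ρ e) + (Y.card + 1) * M ^ (ρ f)
        < (X.card - 1) * M ^ (ρ e) + M ^ (ρ e) := Nat.add_lt_add_left hpow _
    have h3 : (X.card - 1) * M ^ (ρ e) + M ^ (ρ e) = X.card * M ^ (ρ e) := by
      have h4 : X.card - 1 + 1 = X.card := Nat.succ_pred_eq_of_pos hcX
      calc (X.card - 1) * M ^ (ρ e) + M ^ (ρ e) = (X.card - 1 + 1) * M ^ (ρ e) :=
            (Nat.succ_mul _ _).symm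
        _ = X.card * M ^ (ρ e) := by rw [h4]
    have h5 : X.card * M ^ (ρ e) ≤ F σ e + F σ f := by
      rw [← hFe]; exact Nat.le_add_right _ _
    omega
  have hΦlt : Φ σ'' < Φ σ := by
    rw [hsplit σ'', hsplit σ]
    have hsum : ∑ x ∈ (Finset.univ.erase e).erase f, F σ'' x
        = ∑ x ∈ (Finset.univ.erase e).erase f, F σ x := Finset.sum_congr rfl hrest
    omega
  have hmem'' : σ'' ∈ Finset.univ.filter fun τ' : N → Finset E => ∀ i, τ' i ∈ 𝒮 i := by
    rw [Finset.mem_filter]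
    refine ⟨Finset.mem_univ _, fun j => ?_⟩
    rw [hσ''def]
    by_cases hj : j = i
    · subst hj
      rw [Function.update_self]
      exact hswap
    · rw [Function.update_of_ne hj]
      exact hσS j
  exact absurd (hσmin σ'' hmem'') (not_le.mpr hΦlt)
end

section
/- Every weighted matroid bottleneck congestion game in which the strategies of all players have the same cardinality has a pure Nash equilibrium. -/
open Finset

/-- The cost `γ_i(σ) = max_{e ∈ σ i} c_e(w(N_e(σ)))` imposed on player `i`
in a weighted bottleneck congestion game. -/
noncomputable def weightedBottleneckCost {N E : Type*} [Fintype N] [DecidableEq E]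
    (w : N → NNReal) (c : E → NNReal → NNReal)
    (σ : N → Finset E) (i : N) : NNReal :=
  (σ i).sup (fun e => c e (∑ j ∈ playersOn σ e, w j))

/-- Every weighted matroid bottleneck congestion game in which the strategies of
all players have the same cardinality has a pure Nash equilibrium. -/
theorem weighted_matroid_bottleneck_congestion_game_has_PNE
    {N E : Type*} [Fintype N] [DecidableEq N] [Fintype E] [DecidableEq E]
    (𝒮 : N → Finset (Finset E)) (hmatroid : ∀ i, IsBaseFamily (𝒮 i))
    (r : ℕ) (hr : 0 < r) (hcard : ∀ i, ∀ S ∈ 𝒮 i, S.card = r)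
    (w : N → NNReal) (c : E → NNReal → NNReal)
    (hc : ∀ e, Monotone (c e)) :
    ∃ σ : N → Finset E, (∀ i, σ i ∈ 𝒮 i) ∧
      ∀ i : N, ∀ S' ∈ 𝒮 i,
        weightedBottleneckCost w c σ i ≤
          weightedBottleneckCost w c (Function.update σ i S') i := by
  classical
  -- the load on resource `e` under profile `σ`
  set load : (N → Finset E) → E → NNReal := fun σ e => ∑ j ∈ playersOn σ e, w j with hloaddef
  -- all possibly realizable cost values
  set V : Finset NNReal :=
    Finset.image (fun p : E × Finset N => c p.1 (∑ j ∈ p.2, w j)) Finset.univ with hVdef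
  have hmemV : ∀ (e : E) (A : Finset N), c e (∑ j ∈ A, w j) ∈ V := by
    intro e A
    exact Finset.mem_image.mpr ⟨(e, A), Finset.mem_univ _, rfl⟩
  -- the rank of a value among realizable values
  set rk : NNReal → ℕ := fun v => (V.filter (fun x => x < v)).card with hrkdef
  have hrk_mono : ∀ {v v' : NNReal}, v ≤ v' → rk v ≤ rk v' := by
    intro v v' h
    apply Finset.card_le_card
    intro x hx
    rw [Finset.mem_filter] at hx ⊢
    exact ⟨hx.1, lt_of_lt_of_le hx.2 h⟩
  have hrk_strict : ∀ {v v' : NNReal}, v ∈ V → v < v' → rk v < rk v' := by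
    intro v v' hv h
    apply Finset.card_lt_card
    constructor
    · intro x hx
      rw [Finset.mem_filter] at hx ⊢
      exact ⟨hx.1, hx.2.trans h⟩
    · intro hsub
      have hvmem := hsub (Finset.mem_filter.mpr ⟨hv, h⟩)
      rw [Finset.mem_filter] at hvmem
      exact absurd hvmem.2 (lt_irrefl v)
  set B : ℕ := Fintype.card N + 2 with hBdef
  -- the potential function
  set Φ : (N → Finset E) → ℕ :=
    fun σ => ∑ e : E, (playersOn σ e).card * B ^ rk (c e (load σ e)) with hΦdef
  -- the set of valid profiles
  set P : Finset (N → Finset E) := Finset.univ.filter (fun σ => ∀ i, σ i ∈ 𝒮 i) with hPdef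
  have hPmem : ∀ σ : N → Finset E, σ ∈ P ↔ ∀ i, σ i ∈ 𝒮 i := by
    intro σ; simp [hPdef]
  have hPne : P.Nonempty := by
    refine ⟨fun i => (hmatroid i).1.choose, (hPmem _).mpr fun i => (hmatroid i).1.choose_spec⟩
  obtain ⟨σ, hσP, hσmin⟩ := Finset.exists_min_image P Φ hPne
  have hσ : ∀ i, σ i ∈ 𝒮 i := (hPmem σ).mp hσP
  refine ⟨σ, hσ, ?_⟩
  by_contra hcon
  push_neg at hcon
  obtain ⟨i, S', hS', hlt⟩ := hcon
  -- the most expensive resource of player i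
  have hii : (σ i).Nonempty := by
    rw [← Finset.card_pos, hcard i _ (hσ i)]; exact hr
  obtain ⟨e₀, he₀, ha⟩ :=
    Finset.exists_mem_eq_sup (σ i) hii (fun e => c e (load σ e))
  have hcostσ : weightedBottleneckCost w c σ i = c e₀ (load σ e₀) := ha
  -- e₀ is not in S'
  have he₀S' : e₀ ∉ S' := by
    intro hmem
    have hsame : playersOn (Function.update σ i S') e₀ = playersOn σ e₀ := by
      ext j
      by_cases hj : j = i <;>
        simp [playersOn, Function.update_apply, hj, hmem, he₀]
    have hle : c e₀ (load σ e₀) ≤ weightedBottleneckCost w c (Function.update σ i S') i := by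
      have : e₀ ∈ Function.update σ i S' i := by simp [hmem]
      have h2 := Finset.le_sup
        (f := fun e => c e (∑ j ∈ playersOn (Function.update σ i S') e, w j)) this
      rw [weightedBottleneckCost]
      calc c e₀ (load σ e₀)
          = c e₀ (∑ j ∈ playersOn (Function.update σ i S') e₀, w j) := by
            rw [hsame]
        _ ≤ _ := h2
    rw [← hcostσ] at hle
    exact absurd hlt (not_lt.mpr hle)
  -- matroid exchange
  obtain ⟨f, hf, hT⟩ := (hmatroid i).2 (σ i) (hσ i) S' hS' e₀
    (Finset.mem_sdiff.mpr ⟨he₀, he₀S'⟩)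
  have hfS' : f ∈ S' := (Finset.mem_sdiff.mp hf).1
  have hfσ : f ∉ σ i := (Finset.mem_sdiff.mp hf).2
  have hfe₀ : e₀ ≠ f := fun h => hfσ (h ▸ he₀)
  have hfnp : i ∉ playersOn σ f := by simp [playersOn, hfσ]
  have hip : i ∈ playersOn σ e₀ := by simp [playersOn, he₀]
  -- the new strategy joins f with its load increased by w i
  have hpupf : playersOn (Function.update σ i S') f = insert i (playersOn σ f) := by
    ext j
    by_cases hj : j = i <;>
      simp [playersOn, Function.update_apply, hj, hfS']
  have hfb : c f (w i + load σ f) < c e₀ (load σ e₀) := by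
    have h1 : c f (∑ j ∈ playersOn (Function.update σ i S') f, w j)
        ≤ weightedBottleneckCost w c (Function.update σ i S') i := by
      rw [weightedBottleneckCost]
      exact Finset.le_sup (f := fun e => c e (∑ j ∈ playersOn (Function.update σ i S') e, w j))
        (by simp [hfS'] : f ∈ Function.update σ i S' i)
    rw [hpupf, Finset.sum_insert hfnp] at h1
    calc c f (w i + load σ f) ≤ weightedBottleneckCost w c (Function.update σ i S') i := h1
      _ < weightedBottleneckCost w c σ i := hlt
      _ = c e₀ (load σ e₀) := hcostσ
  -- the swapped profile τ
  set T : Finset E := insert f ((σ i).erase e₀) with hTdef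
  set τ : N → Finset E := Function.update σ i T with hτdef
  have hτP : τ ∈ P := by
    rw [hPmem]
    intro j
    by_cases hj : j = i
    · subst hj; simpa [hτdef, hTdef] using hT
    · simpa [hτdef, Function.update_apply, hj] using hσ j
  -- players on each resource under τ
  have hpe₀ : playersOn τ e₀ = (playersOn σ e₀).erase i := by
    ext j
    by_cases hj : j = i <;>
      simp [playersOn, hτdef, hTdef, Function.update_apply, hj, hfe₀, he₀]
  have hpf : playersOn τ f = insert i (playersOn σ f) := by
    ext j
    by_cases hj : j = i <;>
      simp [playersOn, hτdef, hTdef, Function.update_apply, hj]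
  have hpe : ∀ e : E, e ≠ e₀ → e ≠ f → playersOn τ e = playersOn σ e := by
    intro e he1 he2
    ext j
    by_cases hj : j = i <;>
      simp [playersOn, hτdef, hTdef, Function.update_apply, hj, he1, he2]
  -- loads
  have hloadf : load τ f = w i + load σ f := by
    simp only [hloaddef]
    rw [hpf, Finset.sum_insert hfnp]
  have hloade₀ : load τ e₀ ≤ load σ e₀ := by
    simp only [hloaddef]
    rw [hpe₀]
    exact Finset.sum_le_sum_of_subset (Finset.erase_subset i _)
  -- the potential strictly decreases
  have hΦlt : Φ τ < Φ σ := by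
    have hpairsub : ({e₀, f} : Finset E) ⊆ Finset.univ := Finset.subset_univ _
    have hsplit : ∀ ρ : N → Finset E,
        Φ ρ = ∑ e ∈ Finset.univ \ {e₀, f}, (playersOn ρ e).card * B ^ rk (c e (load ρ e))
          + ((playersOn ρ e₀).card * B ^ rk (c e₀ (load ρ e₀))
             + (playersOn ρ f).card * B ^ rk (c f (load ρ f))) := by
      intro ρ
      simp only [hΦdef]
      rw [← Finset.sum_sdiff hpairsub, Finset.sum_pair hfe₀]
    rw [hsplit τ, hsplit σ]
    have hrest : ∑ e ∈ Finset.univ \ {e₀, f}, (playersOn τ e).card * B ^ rk (c e (load τ e))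
        = ∑ e ∈ Finset.univ \ {e₀, f}, (playersOn σ e).card * B ^ rk (c e (load σ e)) := by
      apply Finset.sum_congr rfl
      intro e he
      rw [Finset.mem_sdiff, Finset.mem_insert, Finset.mem_singleton] at he
      push_neg at he
      have h := hpe e he.2.1 he.2.2
      simp only [hloaddef]
      rw [h]
    rw [hrest]
    apply Nat.add_lt_add_left
    -- core numeric inequality
    set m₀ := (playersOn σ e₀).card with hm₀
    set mf := (playersOn σ f).card with hmf
    have hm₀pos : 0 < m₀ := Finset.card_pos.mpr ⟨i, hip⟩
    have hcard₀ : (playersOn τ e₀).card = m₀ - 1 := by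
      rw [hpe₀, Finset.card_erase_of_mem hip]
    have hcardf : (playersOn τ f).card = mf + 1 := by
      rw [hpf, Finset.card_insert_of_notMem hfnp]
    set k : ℕ := rk (c e₀ (load σ e₀)) with hk
    have hk1 : rk (c e₀ (load τ e₀)) ≤ k := hrk_mono (hc e₀ hloade₀)
    have hk2 : rk (c f (load τ f)) < k := by
      rw [hloadf]
      apply hrk_strict _ hfb
      have : w i + load σ f = ∑ j ∈ insert i (playersOn σ f), w j := by
        rw [Finset.sum_insert hfnp]
      rw [this]
      exact hmemV f _
    have hBpos : 1 ≤ B := by omega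
    rw [hcard₀, hcardf]
    calc (m₀ - 1) * B ^ rk (c e₀ (load τ e₀)) + (mf + 1) * B ^ rk (c f (load τ f))
        ≤ (m₀ - 1) * B ^ k + (mf + 1) * B ^ rk (c f (load τ f)) := by
          apply Nat.add_le_add_right
          exact Nat.mul_le_mul_left _ (Nat.pow_le_pow_right hBpos hk1)
      _ < (m₀ - 1) * B ^ k + B ^ k := by
          apply Nat.add_lt_add_left
          calc (mf + 1) * B ^ rk (c f (load τ f))
              < B * B ^ rk (c f (load τ f)) := by
                apply Nat.mul_lt_mul_of_lt_of_le _ (le_refl _) (Nat.pow_pos (by omega))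
                have : mf ≤ Fintype.card N := Finset.card_le_univ _
                omega
            _ = B ^ (rk (c f (load τ f)) + 1) := by ring
            _ ≤ B ^ k := Nat.pow_le_pow_right hBpos (by omega)
      _ = m₀ * B ^ k := by
          have h1 : m₀ - 1 + 1 = m₀ := Nat.succ_pred_eq_of_pos hm₀pos
          calc (m₀ - 1) * B ^ k + B ^ k = (m₀ - 1 + 1) * B ^ k := by ring
            _ = m₀ * B ^ k := by rw [h1]
      _ ≤ m₀ * B ^ k + mf * B ^ rk (c f (load σ f)) := Nat.le_add_right _ _
  exact absurd (hσmin τ hτP) (not_le.mpr hΦlt)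
end

section
/- Every weighted matroid congestion game with L^p-aggregation functions (for any real p ≥ 1) in which the strategies of all players have the same cardinality has a pure Nash equilibrium. -/
open Finset

/-- The cost `γ_i(σ) = (∑_{e ∈ σ i} c_e(w(N_e(σ)))^p)^{1/p}` imposed on player `i`
in a weighted congestion game with `L^p`-aggregation functions. -/
noncomputable def weightedLpCost {N E : Type*} [Fintype N] [DecidableEq E]
    (p : ℝ) (w : N → NNReal) (c : E → NNReal → NNReal)
    (σ : N → Finset E) (i : N) : NNReal :=
  (∑ e ∈ σ i, c e (∑ j ∈ playersOn σ e, w j) ^ p) ^ (1 / p)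

lemma pot_core (M a b ρX ρX' ρY' : ℕ) (ha : 1 ≤ a) (hb : b + 2 ≤ M)
    (h1 : ρX' ≤ ρX) (h2 : ρY' < ρX) :
    (a - 1) * M ^ ρX' + (b + 1) * M ^ ρY' < a * M ^ ρX := by
  have hM1 : 1 < M := by omega
  have h3 : (b + 1) * M ^ ρY' < M ^ ρX := by
    calc (b + 1) * M ^ ρY' < M * M ^ ρY' := by
          have hpos : 0 < M ^ ρY' := Nat.pow_pos (by omega)
          exact Nat.mul_lt_mul_of_lt_of_le (by omega) le_rfl hpos
      _ = M ^ (ρY' + 1) := by ring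
      _ ≤ M ^ ρX := Nat.pow_le_pow_right (by omega) (by omega)
  calc (a - 1) * M ^ ρX' + (b + 1) * M ^ ρY'
      ≤ (a - 1) * M ^ ρX + (b + 1) * M ^ ρY' := by
        have := Nat.pow_le_pow_right (le_of_lt hM1) h1
        exact Nat.add_le_add_right (Nat.mul_le_mul_left _ this) _
    _ < (a - 1) * M ^ ρX + M ^ ρX := Nat.add_lt_add_left h3 _
    _ = (a - 1 + 1) * M ^ ρX := by ring
    _ = a * M ^ ρX := by rw [Nat.sub_add_cancel ha]

lemma matroid_local_search {E : Type*} [DecidableEq E]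
    (B : Finset (Finset E))
    (hex : ∀ S ∈ B, ∀ S' ∈ B, ∀ e ∈ S \ S', ∃ f ∈ S' \ S, insert f (S.erase e) ∈ B)
    (r : ℕ) (hcard : ∀ S ∈ B, S.card = r)
    (g : E → NNReal) (S : Finset E) (hS : S ∈ B)
    (hloc : ∀ e ∈ S, ∀ f ∉ S, insert f (S.erase e) ∈ B → g e ≤ g f) :
    ∀ S' ∈ B, ∑ x ∈ S, g x ≤ ∑ x ∈ S', g x := by
  suffices h : ∀ k (S' : Finset E), S' ∈ B → (S' \ S).card ≤ k →
      ∑ x ∈ S, g x ≤ ∑ x ∈ S', g x by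
    intro S' hS'; exact h _ S' hS' le_rfl
  intro k
  induction k with
  | zero =>
    intro S' hS' hk
    have hempty : S' \ S = ∅ := card_eq_zero.mp (Nat.le_zero.mp hk)
    have hsub : S' ⊆ S := by
      intro x hx
      by_contra hxS
      exact absurd (mem_sdiff.mpr ⟨hx, hxS⟩) (by simp [hempty])
    have : S' = S := eq_of_subset_of_card_le hsub (by rw [hcard S hS, hcard S' hS'])
    simp [this]
  | succ k IH =>
    intro S' hS' hk
    rcases eq_or_ne (S' \ S) ∅ with hempty | hne
    · exact IH S' hS' (by simp [hempty])
    · obtain ⟨x, hx, hxmax⟩ := exists_max_image (S' \ S) g (nonempty_iff_ne_empty.mpr hne)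
      obtain ⟨y, hy, hS'2⟩ := hex S' hS' S hS x hx
      have hyS : y ∈ S := (mem_sdiff.mp hy).1
      have hyS' : y ∉ S' := (mem_sdiff.mp hy).2
      have hxS' : x ∈ S' := (mem_sdiff.mp hx).1
      have hxS : x ∉ S := (mem_sdiff.mp hx).2
      have hdiff : (insert y (S'.erase x)) \ S = (S' \ S).erase x := by
        ext z
        simp only [mem_sdiff, mem_insert, mem_erase]
        constructor
        · rintro ⟨(rfl | ⟨hzx, hz⟩), hzS⟩
          · exact absurd hyS hzS
          · exact ⟨hzx, hz, hzS⟩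
        · rintro ⟨hzx, hz, hzS⟩; exact ⟨Or.inr ⟨hzx, hz⟩, hzS⟩
      have hcardpos : 0 < (S' \ S).card := card_pos.mpr ⟨x, hx⟩
      have hcard2 : ((insert y (S'.erase x)) \ S).card ≤ k := by
        rw [hdiff, card_erase_of_mem hx]; omega
      have hIH := IH _ hS'2 hcard2
      obtain ⟨f, hf, hBf⟩ := hex S hS S' hS' y (mem_sdiff.mpr ⟨hyS, hyS'⟩)
      have hfS : f ∉ S := (mem_sdiff.mp hf).2
      have hgy : g y ≤ g f := hloc y hyS f hfS hBf
      have hgf : g f ≤ g x := hxmax f (mem_sdiff.mpr ⟨(mem_sdiff.mp hf).1, hfS⟩)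
      have h1 : ∑ z ∈ insert y (S'.erase x), g z = g y + ∑ z ∈ S'.erase x, g z :=
        sum_insert (by simp [hyS'])
      have h2 : ∑ z ∈ S', g z = g x + ∑ z ∈ S'.erase x, g z := (add_sum_erase _ _ hxS').symm
      calc ∑ z ∈ S, g z ≤ ∑ z ∈ insert y (S'.erase x), g z := hIH
        _ = g y + ∑ z ∈ S'.erase x, g z := h1
        _ ≤ g x + ∑ z ∈ S'.erase x, g z := by gcongr; exact hgy.trans hgf
        _ = ∑ z ∈ S', g z := h2.symm

/-- Every weighted matroid congestion game with `L^p`-aggregation functions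
(for any real `p ≥ 1`) in which the strategies of all players have the same
cardinality has a pure Nash equilibrium. -/
theorem weighted_matroid_congestion_game_Lp_has_PNE
    {N E : Type*} [Fintype N] [DecidableEq N] [Fintype E] [DecidableEq E]
    (𝒮 : N → Finset (Finset E)) (hmatroid : ∀ i, IsBaseFamily (𝒮 i))
    (r : ℕ) (hr : 0 < r) (hcard : ∀ i, ∀ S ∈ 𝒮 i, S.card = r)
    (p : ℝ) (hp : 1 ≤ p)
    (w : N → NNReal) (c : E → NNReal → NNReal)
    (hc : ∀ e, Monotone (c e)) :
    ∃ σ : N → Finset E, (∀ i, σ i ∈ 𝒮 i) ∧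
      ∀ i : N, ∀ S' ∈ 𝒮 i,
        weightedLpCost p w c σ i ≤ weightedLpCost p w c (Function.update σ i S') i := by
  classical
  have hp0 : (0:ℝ) ≤ p := le_trans zero_le_one hp
  set load : (N → Finset E) → E → NNReal := fun σ e => ∑ j ∈ playersOn σ e, w j with hloaddef
  set V : Finset NNReal :=
    (Finset.univ : Finset ((N → Finset E) × E)).image
      (fun q => c q.2 (load q.1 q.2) ^ p) with hVdef
  set rk : NNReal → ℕ := fun v => (V.filter (fun u => u < v)).card with hrkdef
  have rk_mono : ∀ {u v : NNReal}, u ≤ v → rk u ≤ rk v := by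
    intro u v huv
    apply card_le_card
    intro z hz
    rw [mem_filter] at hz ⊢
    exact ⟨hz.1, lt_of_lt_of_le hz.2 huv⟩
  have rk_strict : ∀ {u v : NNReal}, u ∈ V → u < v → rk u < rk v := by
    intro u v huV huv
    apply card_lt_card
    constructor
    · intro z hz
      rw [mem_filter] at hz ⊢
      exact ⟨hz.1, lt_trans hz.2 huv⟩
    · intro hsub
      have : u ∈ V.filter (fun z => z < u) := hsub (mem_filter.mpr ⟨huV, huv⟩)
      exact absurd (mem_filter.mp this).2 (lt_irrefl u)
  set M : ℕ := Fintype.card N + 2 with hMdef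
  set Φ : (N → Finset E) → ℕ :=
    fun σ => ∑ x : E, (playersOn σ x).card * M ^ (rk (c x (load σ x) ^ p)) with hΦdef
  set P : Finset (N → Finset E) :=
    Finset.univ.filter (fun σ : N → Finset E => ∀ i, σ i ∈ 𝒮 i) with hPdef
  have hPne : P.Nonempty := by
    refine ⟨fun i => (hmatroid i).1.choose, ?_⟩
    rw [hPdef, mem_filter]
    exact ⟨mem_univ _, fun i => (hmatroid i).1.choose_spec⟩
  obtain ⟨σ, hσP, hσmin⟩ := P.exists_min_image Φ hPne
  have hσ : ∀ i, σ i ∈ 𝒮 i := (mem_filter.mp hσP).2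
  refine ⟨σ, hσ, ?_⟩
  intro i S' hS'
  by_contra hltc
  push_neg at hltc
  set g : E → NNReal := fun f => c f (w i + ∑ j ∈ (playersOn σ f).erase i, w j) ^ p with hgdef
  have hplayers : ∀ (T : Finset E), ∀ f ∈ T,
      playersOn (Function.update σ i T) f = insert i ((playersOn σ f).erase i) := by
    intro T f hfT
    ext j
    simp only [playersOn, mem_filter, mem_univ, true_and, mem_insert, mem_erase]
    rcases eq_or_ne j i with rfl | hji
    · simp [Function.update_self, hfT]
    · simp [Function.update_of_ne hji, hji]
  have hcost : ∀ T : Finset E,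
      weightedLpCost p w c (Function.update σ i T) i = (∑ f ∈ T, g f) ^ (1/p) := by
    intro T
    unfold weightedLpCost
    rw [Function.update_self]
    congr 1
    apply sum_congr rfl
    intro f hfT
    rw [hplayers T f hfT, sum_insert (notMem_erase _ _)]
  have hcostσ : weightedLpCost p w c σ i = (∑ f ∈ σ i, g f) ^ (1/p) := by
    have := hcost (σ i)
    rwa [Function.update_eq_self] at this
  rw [hcostσ, hcost S'] at hltc
  have hsum : ∑ f ∈ S', g f < ∑ f ∈ σ i, g f := by
    by_contra hge
    push_neg at hge
    exact absurd (NNReal.rpow_le_rpow hge (by positivity)) (not_le.mpr hltc)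
  have hloc : ∀ e ∈ σ i, ∀ f ∉ σ i, insert f ((σ i).erase e) ∈ 𝒮 i → g e ≤ g f := by
    intro e he f hf hB2
    by_contra hgt
    push_neg at hgt
    have hef : e ≠ f := fun h => hf (h ▸ he)
    set σ' : N → Finset E := Function.update σ i (insert f ((σ i).erase e)) with hσ'def
    have hiE : i ∈ playersOn σ e := mem_filter.mpr ⟨mem_univ i, he⟩
    have hiF : i ∉ playersOn σ f := by
      simp only [playersOn, mem_filter, mem_univ, true_and]
      exact hf
    have hσ'P : σ' ∈ P := by
      rw [hPdef, mem_filter]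
      refine ⟨mem_univ _, fun j => ?_⟩
      rcases eq_or_ne j i with rfl | hji
      · rw [hσ'def, Function.update_self]; exact hB2
      · rw [hσ'def, Function.update_of_ne hji]; exact hσ j
    -- playersOn descriptions
    have hothers : ∀ x, x ≠ e → x ≠ f → playersOn σ' x = playersOn σ x := by
      intro x hxe hxf
      ext j
      simp only [playersOn, mem_filter, mem_univ, true_and]
      rcases eq_or_ne j i with rfl | hji
      · rw [hσ'def, Function.update_self]
        simp [mem_insert, mem_erase, hxe, hxf]
      · rw [hσ'def, Function.update_of_ne hji]
    have he' : playersOn σ' e = (playersOn σ e).erase i := by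
      ext j
      simp only [playersOn, mem_filter, mem_univ, true_and, mem_erase]
      rcases eq_or_ne j i with rfl | hji
      · rw [hσ'def, Function.update_self]
        simp [mem_insert, mem_erase, hef]
      · rw [hσ'def, Function.update_of_ne hji]
        simp [hji, playersOn]
    have hf' : playersOn σ' f = insert i (playersOn σ f) := by
      ext j
      simp only [playersOn, mem_filter, mem_univ, true_and, mem_insert]
      rcases eq_or_ne j i with rfl | hji
      · rw [hσ'def, Function.update_self]
        simp
      · rw [hσ'def, Function.update_of_ne hji]
        simp [hji, playersOn]
    -- values
    have hXeq : c e (load σ e) ^ p = g e := by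
      simp only [hgdef, hloaddef]
      congr 2
      exact (add_sum_erase _ _ hiE).symm
    have hY'eq : c f (load σ' f) ^ p = g f := by
      simp only [hgdef, hloaddef]
      congr 2
      rw [hf', sum_insert hiF, erase_eq_of_notMem hiF]
    have hX'le : c e (load σ' e) ^ p ≤ c e (load σ e) ^ p := by
      apply NNReal.rpow_le_rpow _ hp0
      apply hc e
      simp only [hloaddef]
      rw [he']
      exact sum_le_sum_of_subset (erase_subset _ _)
    have hXV : c e (load σ e) ^ p ∈ V := by
      rw [hVdef]
      exact mem_image.mpr ⟨(σ, e), mem_univ _, rfl⟩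
    have hY'V : c f (load σ' f) ^ p ∈ V := by
      rw [hVdef]
      exact mem_image.mpr ⟨(σ', f), mem_univ _, rfl⟩
    have hrY'X : rk (c f (load σ' f) ^ p) < rk (c e (load σ e) ^ p) := by
      apply rk_strict hY'V
      rw [hY'eq, hXeq]; exact hgt
    have hrX'X : rk (c e (load σ' e) ^ p) ≤ rk (c e (load σ e) ^ p) := rk_mono hX'le
    -- cardinalities
    have hne : (playersOn σ' e).card = (playersOn σ e).card - 1 := by
      rw [he', card_erase_of_mem hiE]
    have hnf : (playersOn σ' f).card = (playersOn σ f).card + 1 := by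
      rw [hf', card_insert_of_notMem hiF]
    have hnepos : 1 ≤ (playersOn σ e).card := card_pos.mpr ⟨i, hiE⟩
    have hnfle : (playersOn σ f).card + 2 ≤ M := by
      rw [hMdef]
      have := card_le_univ (playersOn σ f)
      omega
    -- split sums
    have hsplit : ∀ τ : N → Finset E,
        Φ τ = ((playersOn τ e).card * M ^ (rk (c e (load τ e) ^ p))
          + (playersOn τ f).card * M ^ (rk (c f (load τ f) ^ p)))
          + ∑ x ∈ univ \ {e, f},
              (playersOn τ x).card * M ^ (rk (c x (load τ x) ^ p)) := by
      intro τ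
      simp only [hΦdef]
      rw [← Finset.sum_sdiff (subset_univ ({e, f} : Finset E))]
      rw [sum_pair hef]
      ring
    have hrest : ∑ x ∈ univ \ {e, f},
          (playersOn σ' x).card * M ^ (rk (c x (load σ' x) ^ p))
        = ∑ x ∈ univ \ {e, f},
          (playersOn σ x).card * M ^ (rk (c x (load σ x) ^ p)) := by
      apply sum_congr rfl
      intro x hx
      have hx' := mem_sdiff.mp hx
      have hxe : x ≠ e := fun h => hx'.2 (by simp [h])
      have hxf : x ≠ f := fun h => hx'.2 (by simp [h])
      simp only [hloaddef, hothers x hxe hxf]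
    have hΦlt : Φ σ' < Φ σ := by
      rw [hsplit σ', hsplit σ, hrest]
      apply Nat.add_lt_add_right
      rw [hne, hnf]
      calc ((playersOn σ e).card - 1) * M ^ (rk (c e (load σ' e) ^ p))
            + ((playersOn σ f).card + 1) * M ^ (rk (c f (load σ' f) ^ p))
          < (playersOn σ e).card * M ^ (rk (c e (load σ e) ^ p)) :=
            pot_core M _ _ _ _ _ hnepos hnfle hrX'X hrY'X
        _ ≤ _ := Nat.le_add_right _ _
    exact absurd (hσmin σ' hσ'P) (not_le.mpr hΦlt)
  have hglobal := matroid_local_search (𝒮 i) (hmatroid i).2 r (hcard i) g (σ i) (hσ i) hloc S' hS'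
  exact absurd hglobal (not_le.mpr hsum)
end

section
/- Let (N, E, (𝒮_i)_{i∈N}, (c_e)_{e∈E}, g) be a matroid congestion game with set-functional costs and complementarities whose aggregation function g is symmetric and weakly monotone and whose cost functions c_e are monotonically nondecreasing with respect to g. If a player i ∈ N has an improving local move S_i' = (S_i \ {e*}) ∪ {f*} in a strategy profile S, then the resulting profile S' = (S_{-i}, S_i') satisfies Φ(S') ≺_lex Φ(S); consequently, since the game is finite, a sequence of improving local moves terminates in a pure Nash equilibrium. -/
open Finset

/-- The relation `x ⪯_g y`, meaning `g(v', x) ≤ g(v', y)` for every `v' ∈ ℝ₊^r`. -/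
def precG {r : ℕ} (g : (Fin (r + 1) → NNReal) → ℝ) (x y : NNReal) : Prop :=
  ∀ v : Fin r → NNReal, g (Fin.snoc v x) ≤ g (Fin.snoc v y)

/-- The equivalence `x ∼_g y`: both `x ⪯_g y` and `y ⪯_g x`. -/
def simG {r : ℕ} (g : (Fin (r + 1) → NNReal) → ℝ) (x y : NNReal) : Prop :=
  precG g x y ∧ precG g y x

/-- The strict relation `x ≺_g y`: `x ⪯_g y` but not `y ⪯_g x`. -/
def ltG {r : ℕ} (g : (Fin (r + 1) → NNReal) → ℝ) (x y : NNReal) : Prop :=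
  precG g x y ∧ ¬ precG g y x

/-- The potential vector `φ_e(σ) = (c_e(N_e(σ)), n_e(σ))` of a resource `e`. -/
def phi {N E : Type*} [Fintype N] [DecidableEq E]
    (c : E → Finset N → NNReal) (σ : N → Finset E) (e : E) : NNReal × ℕ :=
  (c e (playersOn σ e), (playersOn σ e).card)

/-- `φ ⪯_lex φ'` for potential vectors: either `c ≺_g c'`, or `c ∼_g c'` and `n ≤ n'`. -/
def pairLe {r : ℕ} (g : (Fin (r + 1) → NNReal) → ℝ) (a b : NNReal × ℕ) : Prop :=
  ltG g a.1 b.1 ∨ (simG g a.1 b.1 ∧ a.2 ≤ b.2)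

/-- `φ ∼_lex φ'`: both `φ ⪯_lex φ'` and `φ' ⪯_lex φ`. -/
def pairEquiv {r : ℕ} (g : (Fin (r + 1) → NNReal) → ℝ) (a b : NNReal × ℕ) : Prop :=
  pairLe g a b ∧ pairLe g b a

/-- `φ ≺_lex φ'`: `φ ⪯_lex φ'` but not `φ' ⪯_lex φ`. -/
def pairLt {r : ℕ} (g : (Fin (r + 1) → NNReal) → ℝ) (a b : NNReal × ℕ) : Prop :=
  pairLe g a b ∧ ¬ pairLe g b a

/-- Strict lexicographic comparison of two sequences with respect to a strict
relation `lt` and an equivalence `eqv`. -/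
def seqLtLex {α : Type*} (lt eqv : α → α → Prop) : List α → List α → Prop
  | _, [] => False
  | [], _ :: _ => True
  | a :: l₁, b :: l₂ => lt a b ∨ (eqv a b ∧ seqLtLex lt eqv l₁ l₂)
attribute [local instance] Classical.propDecidable

section OrderTheory
variable {r : ℕ} (g : (Fin (r + 1) → NNReal) → ℝ)

lemma precG_refl (x : NNReal) : precG g x x := fun _ => le_refl _

lemma precG_trans {x y z : NNReal} (h1 : precG g x y) (h2 : precG g y z) :
    precG g x z := fun v => (h1 v).trans (h2 v)

lemma ltG_of_prec_of_lt {x y z : NNReal} (h1 : precG g x y) (h2 : ltG g y z) :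
    ltG g x z :=
  ⟨precG_trans g h1 h2.1, fun hz => h2.2 (precG_trans g hz h1)⟩



lemma precG_total (hwm : WeaklyMonotone g) (x y : NNReal) : precG g x y ∨ precG g y x := hwm x y

lemma pairLe_refl (a : NNReal × ℕ) : pairLe g a a :=
  Or.inr ⟨⟨precG_refl g _, precG_refl g _⟩, le_rfl⟩

lemma pairLe_trans {a b d : NNReal × ℕ} (h1 : pairLe g a b) (h2 : pairLe g b d) :
    pairLe g a d := by
  rcases h1 with ⟨h1p, h1n⟩ | ⟨⟨h1p, h1q⟩, h1n⟩ <;>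
    rcases h2 with ⟨h2p, h2n⟩ | ⟨⟨h2p, h2q⟩, h2n⟩
  · exact Or.inl ⟨precG_trans g h1p h2p, fun hz => h1n (precG_trans g h2p hz)⟩
  · exact Or.inl ⟨precG_trans g h1p h2p, fun hz => h1n (precG_trans g h2p hz)⟩
  · exact Or.inl ⟨precG_trans g h1p h2p, fun hz => h2n (precG_trans g hz h1p)⟩
  · exact Or.inr ⟨⟨precG_trans g h1p h2p, precG_trans g h2q h1q⟩, le_trans h1n h2n⟩
lemma pairLe_total (hwm : WeaklyMonotone g) (a b : NNReal × ℕ) : pairLe g a b ∨ pairLe g b a := by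
  rcases hwm a.1 b.1 with h | h
  · by_cases h' : precG g b.1 a.1
    · rcases Nat.le_total a.2 b.2 with hn | hn
      · exact Or.inl (Or.inr ⟨⟨h, h'⟩, hn⟩)
      · exact Or.inr (Or.inr ⟨⟨h', h⟩, hn⟩)
    · exact Or.inl (Or.inl ⟨h, h'⟩)
  · by_cases h' : precG g a.1 b.1
    · rcases Nat.le_total a.2 b.2 with hn | hn
      · exact Or.inl (Or.inr ⟨⟨h', h⟩, hn⟩)
      · exact Or.inr (Or.inr ⟨⟨h, h'⟩, hn⟩)
    · exact Or.inr (Or.inl ⟨h, h'⟩)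

lemma pairLt_of_le_of_lt {a b d : NNReal × ℕ} (h1 : pairLe g a b) (h2 : pairLt g b d) :
    pairLt g a d :=
  ⟨pairLe_trans g h1 h2.1, fun hz => h2.2 (pairLe_trans g hz h1)⟩

lemma pairLt_trans {a b d : NNReal × ℕ} (h1 : pairLt g a b) (h2 : pairLt g b d) :
    pairLt g a d :=
  pairLt_of_le_of_lt g h1.1 h2

lemma pairLt_of_lt_of_eqv {a b d : NNReal × ℕ} (h1 : pairLt g a b) (h2 : pairEquiv g b d) :
    pairLt g a d :=
  ⟨pairLe_trans g h1.1 h2.1, fun hz => h1.2 (pairLe_trans g h2.1 hz)⟩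

lemma pairLt_of_eqv_of_lt {a b d : NNReal × ℕ} (h1 : pairEquiv g a b) (h2 : pairLt g b d) :
    pairLt g a d :=
  ⟨pairLe_trans g h1.1 h2.1, fun hz => h2.2 (pairLe_trans g hz h1.1)⟩

lemma pairEquiv_trans {a b d : NNReal × ℕ} (h1 : pairEquiv g a b) (h2 : pairEquiv g b d) :
    pairEquiv g a d :=
  ⟨pairLe_trans g h1.1 h2.1, pairLe_trans g h2.2 h1.2⟩

lemma pairLt_irrefl (a : NNReal × ℕ) : ¬ pairLt g a a := fun h => h.2 h.1

lemma seqLtLex_trans :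
    ∀ l1 l2 l3 : List (NNReal × ℕ), seqLtLex (pairLt g) (pairEquiv g) l1 l2 →
      seqLtLex (pairLt g) (pairEquiv g) l2 l3 → seqLtLex (pairLt g) (pairEquiv g) l1 l3 := by
  intro l1 l2 l3 h12 h23
  induction l3 generalizing l1 l2 with
  | nil => cases l2 <;> simp [seqLtLex] at h23
  | cons cc t3 ih =>
    cases l2 with
    | nil => cases l1 <;> simp [seqLtLex] at h12
    | cons b t2 =>
      cases l1 with
      | nil => simp [seqLtLex]
      | cons a t1 =>
        simp only [seqLtLex] at h12 h23 ⊢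
        rcases h12 with h | ⟨he, hr⟩ <;> rcases h23 with h' | ⟨he', hr'⟩
        · exact Or.inl (pairLt_trans g h h')
        · exact Or.inl (pairLt_of_lt_of_eqv g h he')
        · exact Or.inl (pairLt_of_eqv_of_lt g he h')
        · exact Or.inr ⟨pairEquiv_trans g he he', ih _ _ hr hr'⟩

lemma seqLtLex_irrefl : ∀ l : List (NNReal × ℕ), ¬ seqLtLex (pairLt g) (pairEquiv g) l l := by
  intro l
  induction l with
  | nil => simp [seqLtLex]
  | cons a t ih =>
    simp only [seqLtLex]
    rintro (h | ⟨-, hr⟩)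
    · exact pairLt_irrefl g a h
    · exact ih hr

end OrderTheory
section CountLemma
attribute [local instance] Classical.propDecidable
variable {r : ℕ} (g : (Fin (r + 1) → NNReal) → ℝ)

/-- number of entries `z` of `L` with `s ⪯ z`. -/
noncomputable def cntGe (s : NNReal × ℕ) (L : List (NNReal × ℕ)) : ℕ :=
  L.countP (fun z => decide (pairLe g s z))

lemma cntGe_perm {L L' : List (NNReal × ℕ)} (h : L.Perm L') (s : NNReal × ℕ) :
    cntGe g s L = cntGe g s L' := h.countP_eq _

lemma cntGe_cons (s a : NNReal × ℕ) (L : List (NNReal × ℕ)) :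
    cntGe g s (a :: L) = cntGe g s L + if pairLe g s a then 1 else 0 := by
  simp [cntGe, List.countP_cons]

lemma cntGe_nil (s : NNReal × ℕ) : cntGe g s [] = 0 := rfl

lemma sorted_count_lt (hwm : WeaklyMonotone g) :
    ∀ (L L' : List (NNReal × ℕ)) (t : NNReal × ℕ),
      L.Pairwise (fun a b => pairLe g b a) → L'.Pairwise (fun a b => pairLe g b a) →
      (∀ s, pairLt g t s → cntGe g s L' ≤ cntGe g s L) →
      cntGe g t L' < cntGe g t L →
      seqLtLex (pairLt g) (pairEquiv g) L' L := by
  intro L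
  induction L with
  | nil =>
    intro L' t _ _ _ hcc
    rw [cntGe_nil] at hcc
    exact absurd hcc (Nat.not_lt_zero _)
  | cons h tl ih =>
    intro L' t hs hs' hcount hcc
    have hsc := List.pairwise_cons.1 hs
    have hth : pairLe g t h := by
      have hpos : 0 < (h :: tl).countP (fun z => decide (pairLe g t z)) := by
        exact lt_of_le_of_lt (Nat.zero_le _) hcc
      rcases List.countP_pos_iff.1 hpos with ⟨z, hz, hzp⟩
      have hzp' : pairLe g t z := of_decide_eq_true hzp
      rcases List.mem_cons.1 hz with rfl | hz
      · exact hzp'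
      · exact pairLe_trans g hzp' (hsc.1 z hz)
    cases L' with
    | nil => simp [seqLtLex]
    | cons h' tl' =>
      by_cases hlt : pairLe g h h'
      · by_cases hlt' : pairLe g h' h
        · -- heads equivalent: recurse
          have hth' : pairLe g t h' := pairLe_trans g hth hlt
          refine Or.inr ⟨⟨hlt', hlt⟩, ih tl' t hsc.2 (List.pairwise_cons.1 hs').2 ?_ ?_⟩
          · intro s hts
            have := hcount s hts
            rw [cntGe_cons, cntGe_cons] at this
            have hiff : pairLe g s h' ↔ pairLe g s h :=
              ⟨fun hz => pairLe_trans g hz hlt', fun hz => pairLe_trans g hz hlt⟩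
            rw [if_congr hiff rfl rfl] at this
            omega
          · have := hcc
            rw [cntGe_cons, cntGe_cons, if_pos hth, if_pos hth'] at this
            omega
        · -- h strictly below h' : contradiction with counts at s = h'
          exfalso
          have hth'' : pairLt g t h' :=
            ⟨pairLe_trans g hth hlt, fun hz => hlt' (pairLe_trans g hz hth)⟩
          have hle := hcount h' hth''
          have h1 : 1 ≤ cntGe g h' (h' :: tl') := by
            rw [cntGe_cons, if_pos (pairLe_refl g h')]; omega
          have h0 : cntGe g h' (h :: tl) = 0 := by
            refine List.countP_eq_zero.2 ?_
            intro z hz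
            simp only [decide_eq_true_eq]
            intro hzp
            rcases List.mem_cons.1 hz with rfl | hz'
            · exact hlt' hzp
            · exact hlt' (pairLe_trans g hzp (hsc.1 z hz'))
          omega
      · -- head of L' strictly below head of L
        rcases pairLe_total g hwm h' h with h'' | h''
        · exact Or.inl ⟨h'', hlt⟩
        · exact absurd h'' hlt
end CountLemma
section Eval
variable {N E : Type*} [Fintype N] [DecidableEq N] [DecidableEq E] {r : ℕ}

lemma playersOn_update (σ : N → Finset E) (i : N) (U : Finset E) (e : E) :
    playersOn (Function.update σ i U) e =
      if e ∈ U then insert i ((playersOn σ e).erase i) else (playersOn σ e).erase i := by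
  ext j
  by_cases hj : j = i
  · subst hj
    by_cases hU : e ∈ U <;>
      simp [playersOn, Function.update_self, hU]
  · by_cases hU : e ∈ U <;>
      simp [playersOn, Function.update_of_ne hj, hU, hj]

lemma range_get_list {n : ℕ} (l : List E) (h : l.length = n) :
    Set.range (fun j : Fin n => l.get (Fin.cast h.symm j)) = {x | x ∈ l} := by
  ext x
  simp only [Set.mem_range, Set.mem_setOf_eq]
  constructor
  · rintro ⟨j, rfl⟩; exact List.get_mem _ _
  · intro hx
    rcases List.mem_iff_get.1 hx with ⟨k, hk⟩
    exact ⟨Fin.cast h k, by simpa using hk⟩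

lemma aggCost_eval (g : (Fin (r + 1) → NNReal) → ℝ) (hsym : SymmetricAgg g)
    (c : E → Finset N → NNReal) (σ : N → Finset E) (i : N)
    (hlen : (σ i).toList.length = r + 1) (e : E) (he : e ∈ σ i)
    (w : Fin r → NNReal)
    (hw : ∀ (k : Fin r) (hk : (k : ℕ) < ((σ i).erase e).toList.length),
        w k = c (((σ i).erase e).toList.get ⟨k, hk⟩)
            (playersOn σ (((σ i).erase e).toList.get ⟨k, hk⟩))) :
    aggCost g c σ i = g (Fin.snoc w (c e (playersOn σ e))) := by
  classical
  set S := σ i with hS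
  set val : E → NNReal := fun e' => c e' (playersOn σ e') with hval
  have hlen' : (S.erase e).toList.length = r := by
    have hcard : S.card = r + 1 := by rw [← Finset.length_toList]; exact hlen
    rw [Finset.length_toList, Finset.card_erase_of_mem he, hcard]
    omega
  set u : Fin (r + 1) → E := fun j => S.toList.get (Fin.cast hlen.symm j) with hu
  set w₀ : Fin r → E := fun k => (S.erase e).toList.get (Fin.cast hlen'.symm k) with hw₀
  set v : Fin (r + 1) → E := Fin.snoc w₀ e with hv
  have hu_inj : Function.Injective u := by
    intro a b hab
    have := List.nodup_iff_injective_get.1 S.nodup_toList hab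
    exact Fin.cast_injective _ this
  have hw₀_inj : Function.Injective w₀ := by
    intro a b hab
    have := List.nodup_iff_injective_get.1 (S.erase e).nodup_toList hab
    exact Fin.cast_injective _ this
  have hw₀_mem : ∀ k, w₀ k ∈ S.erase e := fun k => by
    rw [← Finset.mem_toList]
    exact List.get_mem _ _
  have hv_inj : Function.Injective v := by
    intro a b hab
    rcases Fin.eq_castSucc_or_eq_last a with ⟨a', rfl⟩ | rfl <;>
      rcases Fin.eq_castSucc_or_eq_last b with ⟨b', rfl⟩ | rfl
    · rw [hv] at hab; simp only [Fin.snoc_castSucc] at hab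
      exact congrArg _ (hw₀_inj hab)
    · exfalso
      rw [hv] at hab; simp only [Fin.snoc_castSucc, Fin.snoc_last] at hab
      have hm := hw₀_mem a'
      rw [hab] at hm
      exact (Finset.mem_erase.1 hm).1 rfl
    · exfalso
      rw [hv] at hab; simp only [Fin.snoc_castSucc, Fin.snoc_last] at hab
      have hm := hw₀_mem b'
      rw [← hab] at hm
      exact (Finset.mem_erase.1 hm).1 rfl
    · rfl
  have hrangeu : Set.range u = {x | x ∈ S} := by
    rw [hu, range_get_list S.toList hlen]
    ext x; simp [Finset.mem_toList]
  have hrangev : Set.range v = {x | x ∈ S} := by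
    ext x
    simp only [Set.mem_range, Set.mem_setOf_eq]
    constructor
    · rintro ⟨j, rfl⟩
      rcases Fin.eq_castSucc_or_eq_last j with ⟨j', rfl⟩ | rfl
      · rw [hv]; simp only [Fin.snoc_castSucc]
        exact Finset.mem_of_mem_erase (hw₀_mem j')
      · rw [hv]; simp only [Fin.snoc_last]; exact he
    · intro hx
      by_cases hxe : x = e
      · exact ⟨Fin.last r, by rw [hv]; simp [hxe]⟩
      · have hx' : x ∈ (S.erase e).toList := by
          simp [Finset.mem_toList, Finset.mem_erase, hxe, hx]
        rcases List.mem_iff_get.1 hx' with ⟨k, hk⟩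
        refine ⟨Fin.castSucc (Fin.cast hlen' k), ?_⟩
        rw [hv]; simp only [Fin.snoc_castSucc, hw₀]
        simpa using hk
  set π : Equiv.Perm (Fin (r + 1)) :=
    (Equiv.ofInjective u hu_inj).trans
      ((Equiv.setCongr (hrangeu.trans hrangev.symm)).trans
        (Equiv.ofInjective v hv_inj).symm) with hπ
  have hcomm : ∀ j, v (π j) = u j := by
    intro j
    simp only [hπ, Equiv.trans_apply, Equiv.setCongr_apply,
      Equiv.apply_ofInjective_symm hv_inj, Equiv.ofInjective_apply]
  have h1 : aggCost g c σ i = g (fun j => val (u j)) := by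
    rw [aggCost, dif_pos hlen]
  rw [h1]
  have h2 : (fun j => val (u j)) = (fun j => val (v j)) ∘ π := by
    funext j
    simp only [Function.comp_apply, hcomm j]
  rw [h2, hsym (fun j => val (v j)) π]
  have h3 : (fun j => val (v j)) = Fin.snoc w (c e (playersOn σ e)) := by
    funext j
    rcases Fin.eq_castSucc_or_eq_last j with ⟨j', rfl⟩ | rfl
    · rw [hv]
      simp only [Fin.snoc_castSucc]
      have hk : ((j' : ℕ) : ℕ) < (S.erase e).toList.length := by
        rw [hlen']; exact j'.isLt
      rw [hw j' hk]
      rfl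
    · rw [hv]; simp only [Fin.snoc_last]; rfl
  rw [h3]

end Eval
section Core
attribute [local instance] Classical.propDecidable
variable {N E : Type*} [Fintype N] [DecidableEq N] [Fintype E] [DecidableEq E] {r : ℕ}

lemma pairLt_phi_erase (g : (Fin (r + 1) → NNReal) → ℝ) (c : E → Finset N → NNReal)
    (hc : ∀ e, MonotoneWrt g (c e)) (e : E) (P : Finset N) (i : N) (hi : i ∈ P) :
    pairLt g (c e (P.erase i), (P.erase i).card) (c e P, P.card) := by
  have hprec : precG g (c e (P.erase i)) (c e P) := hc e _ _ (Finset.erase_subset _ _)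
  have hcardlt : (P.erase i).card < P.card := Finset.card_erase_lt_of_mem hi
  by_cases hrev : precG g (c e P) (c e (P.erase i))
  · refine ⟨Or.inr ⟨⟨hprec, hrev⟩, le_of_lt hcardlt⟩, ?_⟩
    rintro (⟨-, hn⟩ | ⟨-, hn⟩)
    · exact hn hprec
    · omega
  · refine ⟨Or.inl ⟨hprec, hrev⟩, ?_⟩
    rintro (⟨hp, -⟩ | ⟨⟨hp, -⟩, -⟩) <;> exact hrev hp

lemma core_potential (g : (Fin (r + 1) → NNReal) → ℝ) (hwm : WeaklyMonotone g)
    (c : E → Finset N → NNReal) (hc : ∀ e, MonotoneWrt g (c e))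
    (σ : N → Finset E) (i : N) (es fs : E) (he : es ∈ σ i) (hf : fs ∉ σ i)
    (hlt : ltG g (c fs (insert i (playersOn σ fs))) (c es (playersOn σ es))) :
    ∀ L L' : List (NNReal × ℕ),
      L.Perm ((Finset.univ.toList (α := E)).map (phi c σ)) →
      L.Pairwise (fun a b => pairLe g b a) →
      L'.Perm ((Finset.univ.toList (α := E)).map
        (phi c (Function.update σ i (insert fs ((σ i).erase es))))) →
      L'.Pairwise (fun a b => pairLe g b a) →
      seqLtLex (pairLt g) (pairEquiv g) L' L := by
  intro L L' hL hLs hL' hL's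
  set σ' := Function.update σ i (insert fs ((σ i).erase es)) with hσ'
  have hef : es ≠ fs := fun h => hf (h ▸ he)
  have hmemi : i ∈ playersOn σ es := by simp [playersOn, he]
  have hnoti : i ∉ playersOn σ fs := by simp [playersOn, hf]
  have hes_not : es ∉ insert fs ((σ i).erase es) := by
    simp [Finset.mem_insert, hef]
  have hfs_in : fs ∈ insert fs ((σ i).erase es) := Finset.mem_insert_self _ _
  have hpe : playersOn σ' es = (playersOn σ es).erase i := by
    rw [hσ', playersOn_update, if_neg hes_not]
  have hpf : playersOn σ' fs = insert i (playersOn σ fs) := by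
    rw [hσ', playersOn_update, if_pos hfs_in, Finset.erase_eq_of_notMem hnoti]
  have hpother : ∀ e : E, e ≠ es → e ≠ fs → phi c σ' e = phi c σ e := by
    intro e he1 he2
    have hmemiff : e ∈ insert fs ((σ i).erase es) ↔ e ∈ σ i := by
      simp [Finset.mem_insert, Finset.mem_erase, he1, he2]
    have : playersOn σ' e = playersOn σ e := by
      rw [hσ', playersOn_update]
      by_cases hmem : e ∈ σ i
      · rw [if_pos (hmemiff.2 hmem)]
        have : i ∈ playersOn σ e := by simp [playersOn, hmem]
        rw [Finset.insert_erase this]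
      · rw [if_neg (fun hx => hmem (hmemiff.1 hx))]
        have : i ∉ playersOn σ e := by simp [playersOn, hmem]
        rw [Finset.erase_eq_of_notMem this]
    rw [phi, phi, this]
  set a := phi c σ es with ha
  set b := phi c σ fs with hb
  set a' := phi c σ' es with ha'
  set b' := phi c σ' fs with hb'
  have ha'a : pairLt g a' a := by
    rw [ha', ha, phi, phi, hpe]
    exact pairLt_phi_erase g c hc es (playersOn σ es) i hmemi
  have hb'a : pairLt g b' a := by
    rw [hb', ha, phi, phi, hpf]
    refine ⟨Or.inl hlt, ?_⟩
    rintro (⟨hp, -⟩ | ⟨⟨hp, -⟩, -⟩) <;> exact hlt.2 hp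
  have hbb' : pairLe g b b' := by
    rw [hb', hb, phi, phi, hpf]
    have hprec : precG g (c fs (playersOn σ fs)) (c fs (insert i (playersOn σ fs))) :=
      hc fs _ _ (Finset.subset_insert _ _)
    by_cases hrev : precG g (c fs (insert i (playersOn σ fs))) (c fs (playersOn σ fs))
    · exact Or.inr ⟨⟨hprec, hrev⟩, Finset.card_le_card (Finset.subset_insert _ _)⟩
    · exact Or.inl ⟨hprec, hrev⟩
  have hba : pairLt g b a := pairLt_of_le_of_lt g hbb' hb'a
  -- decompose the universe list
  set l := (Finset.univ.toList (α := E)) with hl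
  have hnd : l.Nodup := Finset.nodup_toList _
  have hesl : es ∈ l := by simp [hl, Finset.mem_toList]
  have hfsl : fs ∈ l.erase es := by
    rw [List.Nodup.mem_erase_iff hnd]
    exact ⟨hef.symm, by simp [hl, Finset.mem_toList]⟩
  set rest := (l.erase es).erase fs with hrest
  have hperm : l.Perm (es :: fs :: rest) :=
    (List.perm_cons_erase hesl).trans (List.Perm.cons es (List.perm_cons_erase hfsl))
  have hrestmem : ∀ z ∈ rest, z ≠ es ∧ z ≠ fs := by
    intro z hz
    have h1 := (List.Nodup.mem_erase_iff (hnd.erase es)).1 hz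
    have h2 := (List.Nodup.mem_erase_iff hnd).1 h1.2
    exact ⟨h2.1, h1.1⟩
  -- count computations
  have hcntL : ∀ s, cntGe g s L =
      (rest.map (phi c σ)).countP (fun z => decide (pairLe g s z)) +
        ((if pairLe g s a then 1 else 0) + (if pairLe g s b then 1 else 0)) := by
    intro s
    rw [cntGe_perm g (hL.trans ((hperm.map (phi c σ)))) s]
    simp only [List.map_cons]
    rw [cntGe_cons, cntGe_cons]
    rw [ha, hb]
    show (cntGe g s (rest.map (phi c σ))) + _ + _ = _
    rw [cntGe]
    omega
  have hcntL' : ∀ s, cntGe g s L' =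
      (rest.map (phi c σ)).countP (fun z => decide (pairLe g s z)) +
        ((if pairLe g s a' then 1 else 0) + (if pairLe g s b' then 1 else 0)) := by
    intro s
    rw [cntGe_perm g (hL'.trans ((hperm.map (phi c σ')))) s]
    simp only [List.map_cons]
    rw [cntGe_cons, cntGe_cons]
    rw [ha', hb']
    have hcong : ((rest.map (phi c σ')).countP (fun z => decide (pairLe g s z))) =
        ((rest.map (phi c σ)).countP (fun z => decide (pairLe g s z))) := by
      rw [List.countP_map, List.countP_map]
      refine List.countP_congr ?_
      intro z hz
      rcases hrestmem z hz with ⟨h1, h2⟩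
      simp only [Function.comp_apply, hpother z h1 h2]
    show (cntGe g s (rest.map (phi c σ'))) + _ + _ = _
    rw [cntGe, hcong]
    omega
  refine sorted_count_lt g hwm L L' a hLs hL's ?_ ?_
  · intro s hts
    rw [hcntL, hcntL']
    have h1 : ¬ pairLe g s a' := fun hz => hts.2 (pairLe_trans g hz ha'a.1)
    have h2 : ¬ pairLe g s b' := fun hz => hts.2 (pairLe_trans g hz hb'a.1)
    rw [if_neg h1, if_neg h2]
    omega
  · rw [hcntL, hcntL']
    rw [if_neg ha'a.2, if_neg hb'a.2, if_pos (pairLe_refl g a)]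
    omega
end Core
section Improve
variable {N E : Type*} [Fintype N] [DecidableEq N] [Fintype E] [DecidableEq E] {r : ℕ}

lemma improving_ltG (g : (Fin (r + 1) → NNReal) → ℝ) (hsym : SymmetricAgg g)
    (hwm : WeaklyMonotone g) (c : E → Finset N → NNReal)
    (σ : N → Finset E) (i : N) (es fs : E)
    (hScard : (σ i).card = r + 1)
    (hS'card : (insert fs ((σ i).erase es)).card = r + 1)
    (hes : es ∈ σ i) (hfs : fs ∉ σ i)
    (himp : aggCost g c (Function.update σ i (insert fs ((σ i).erase es))) i
      < aggCost g c σ i) :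
    ltG g (c fs (insert i (playersOn σ fs))) (c es (playersOn σ es)) := by
  classical
  set σ' := Function.update σ i (insert fs ((σ i).erase es)) with hσ'
  set dl := ((σ i).erase es).toList with hdl
  set w : Fin r → NNReal := fun k =>
    if hk : (k : ℕ) < dl.length then
      c (dl.get ⟨k, hk⟩) (playersOn σ (dl.get ⟨k, hk⟩)) else 0 with hwdef
  have hlen : (σ i).toList.length = r + 1 := by rw [Finset.length_toList, hScard]
  have h1 : aggCost g c σ i = g (Fin.snoc w (c es (playersOn σ es))) := by
    refine aggCost_eval g hsym c σ i hlen es hes w ?_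
    intro k hk
    rw [hwdef]
    exact dif_pos hk
  have hupd : σ' i = insert fs ((σ i).erase es) := Function.update_self _ _ _
  have hfs' : fs ∈ σ' i := by rw [hupd]; exact Finset.mem_insert_self _ _
  have hlen2 : (σ' i).toList.length = r + 1 := by
    rw [Finset.length_toList, hupd, hS'card]
  have herase : (σ' i).erase fs = (σ i).erase es := by
    rw [hupd, Finset.erase_insert (fun hx => hfs (Finset.mem_of_mem_erase hx))]
  have hplay : ∀ z ∈ (σ i).erase es, playersOn σ' z = playersOn σ z := by
    intro z hz
    obtain ⟨hz1, hz2⟩ := Finset.mem_erase.1 hz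
    rw [hσ', playersOn_update, if_pos (Finset.mem_insert_of_mem hz)]
    have : i ∈ playersOn σ z := by simp [playersOn, hz2]
    rw [Finset.insert_erase this]
  have hlist : ((σ' i).erase fs).toList = dl := by rw [herase]
  have h2 : aggCost g c σ' i = g (Fin.snoc w (c fs (playersOn σ' fs))) := by
    refine aggCost_eval g hsym c σ' i hlen2 fs hfs' w ?_
    intro k
    have haux : ∀ (l : List E), l = dl → ∀ (hk : (k : ℕ) < l.length),
        w k = c (l.get ⟨k, hk⟩) (playersOn σ' (l.get ⟨k, hk⟩)) := by
      rintro l rfl hk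
      have hmem : dl.get ⟨k, hk⟩ ∈ (σ i).erase es := by
        rw [← Finset.mem_toList]; exact List.get_mem _ _
      rw [hwdef]
      simp only [dif_pos hk]
      rw [hplay _ hmem]
    exact haux _ hlist
  have hpf : playersOn σ' fs = insert i (playersOn σ fs) := by
    have hnoti : i ∉ playersOn σ fs := by simp [playersOn, hfs]
    rw [hσ', playersOn_update, if_pos (Finset.mem_insert_self _ _),
      Finset.erase_eq_of_notMem hnoti]
  rw [h1, h2, hpf] at himp
  have hn : ¬ precG g (c es (playersOn σ es)) (c fs (insert i (playersOn σ fs))) := by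
    intro hp
    exact absurd (hp w) (not_le.2 himp)
  rcases hwm (c fs (insert i (playersOn σ fs))) (c es (playersOn σ es)) with h | h
  · exact ⟨h, hn⟩
  · exact absurd h hn

end Improve

/-- In a matroid congestion game with set-functional costs and complementarities
whose aggregation function `g` is symmetric and weakly monotone and whose cost
functions are monotonically nondecreasing w.r.t. `g`:
(1) an improving local move `S_i' = (S_i \ {e*}) ∪ {f*}` of a player `i` in a
profile `σ` strictly decreases the potential, i.e. `Φ(σ') ≺_lex Φ(σ)` where
`Φ(·)` is the sequence of the vectors `φ_e(·)` over all resources sorted in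
lexicographically nonincreasing order; and consequently
(2) the game has a pure Nash equilibrium. -/
theorem improving_local_move_decreases_potential_and_PNE_exists
    {N E : Type*} [Fintype N] [DecidableEq N] [Fintype E] [DecidableEq E] {r : ℕ}
    (𝒮 : N → Finset (Finset E)) (hmatroid : ∀ i, IsBaseFamily (𝒮 i))
    (hcard : ∀ i, ∀ S ∈ 𝒮 i, S.card = r + 1)
    (g : (Fin (r + 1) → NNReal) → ℝ) (hsym : SymmetricAgg g) (hwm : WeaklyMonotone g)
    (c : E → Finset N → NNReal) (hc : ∀ e, MonotoneWrt g (c e)) :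
    (∀ (σ : N → Finset E), (∀ i, σ i ∈ 𝒮 i) →
      ∀ (i : N) (estar fstar : E) (S' : Finset E),
        S' ∈ 𝒮 i → estar ∈ σ i → fstar ∉ σ i →
        S' = insert fstar ((σ i).erase estar) →
        aggCost g c (Function.update σ i S') i < aggCost g c σ i →
        ∀ L L' : List (NNReal × ℕ),
          L.Perm ((Finset.univ.toList (α := E)).map (phi c σ)) →
          L.Pairwise (fun a b => pairLe g b a) →
          L'.Perm ((Finset.univ.toList (α := E)).map (phi c (Function.update σ i S'))) →
          L'.Pairwise (fun a b => pairLe g b a) →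
          seqLtLex (pairLt g) (pairEquiv g) L' L) ∧
    (∃ σ : N → Finset E, (∀ i, σ i ∈ 𝒮 i) ∧
      ∀ i : N, ∀ S' ∈ 𝒮 i,
        aggCost g c σ i ≤ aggCost g c (Function.update σ i S') i) := by
  classical
  constructor
  · -- Part (1)
    intro σ hσ i estar fstar S' hS' hes hfs hS'eq himp L L' hL hLs hL' hL's
    subst hS'eq
    have hlt := improving_ltG g hsym hwm c σ i estar fstar
      (hcard i (σ i) (hσ i)) (hcard i _ hS') hes hfs himp
    exact core_potential g hwm c hc σ i estar fstar hes hfs hlt L L' hL hLs hL' hL's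
  · -- Part (2)
    -- the canonical sorted potential of a profile
    set Pot : (N → Finset E) → List (NNReal × ℕ) := fun σ =>
      ((Finset.univ.toList (α := E)).map (phi c σ)).mergeSort
        (fun a b => decide (pairLe g b a)) with hPot
    have hPotPerm : ∀ σ : N → Finset E,
        (Pot σ).Perm ((Finset.univ.toList (α := E)).map (phi c σ)) := fun σ =>
      List.mergeSort_perm _ _
    have hPotSorted : ∀ σ : N → Finset E,
        (Pot σ).Pairwise (fun a b => pairLe g b a) := by
      intro σ
      have h := List.pairwise_mergeSort (le := fun a b => decide (pairLe g b a))
        (fun a b d hab hbd => decide_eq_true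
          (pairLe_trans g (of_decide_eq_true hbd) (of_decide_eq_true hab)))
        (fun a b => by
          rcases pairLe_total g hwm b a with h | h <;> simp [h])
        ((Finset.univ.toList (α := E)).map (phi c σ))
      exact List.Pairwise.imp (fun h => of_decide_eq_true h) h
    set A : Finset (N → Finset E) :=
      Finset.univ.filter (fun σ => ∀ j, σ j ∈ 𝒮 j) with hA
    have hA0 : (fun j => (hmatroid j).1.choose) ∈ A :=
      Finset.mem_filter.2 ⟨Finset.mem_univ _, fun j => (hmatroid j).1.choose_spec⟩
    set rank : (N → Finset E) → ℕ := fun τ =>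
      (A.filter (fun ρ => seqLtLex (pairLt g) (pairEquiv g) (Pot ρ) (Pot τ))).card
      with hrank
    obtain ⟨σs, hσsA, hmin⟩ := Finset.exists_min_image A rank ⟨_, hA0⟩
    have hσsmem : ∀ j, σs j ∈ 𝒮 j := (Finset.mem_filter.1 hσsA).2
    have hkey : ∀ τ ∈ A, ¬ seqLtLex (pairLt g) (pairEquiv g) (Pot τ) (Pot σs) := by
      intro τ hτ hltx
      have hsub : A.filter (fun ρ => seqLtLex (pairLt g) (pairEquiv g) (Pot ρ) (Pot τ)) ⊆
          A.filter (fun ρ => seqLtLex (pairLt g) (pairEquiv g) (Pot ρ) (Pot σs)) := by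
        intro ρ hρ
        rcases Finset.mem_filter.1 hρ with ⟨hρA, hρlt⟩
        exact Finset.mem_filter.2 ⟨hρA, seqLtLex_trans g _ _ _ hρlt hltx⟩
      have hss : A.filter (fun ρ => seqLtLex (pairLt g) (pairEquiv g) (Pot ρ) (Pot τ)) ⊂
          A.filter (fun ρ => seqLtLex (pairLt g) (pairEquiv g) (Pot ρ) (Pot σs)) := by
        refine (Finset.ssubset_iff_of_subset hsub).2 ⟨τ, Finset.mem_filter.2 ⟨hτ, hltx⟩, ?_⟩
        intro hmem
        exact seqLtLex_irrefl g _ (Finset.mem_filter.1 hmem).2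
      have := Finset.card_lt_card hss
      exact absurd (hmin τ hτ) (not_le.2 this)
    refine ⟨σs, hσsmem, ?_⟩
    intro i S' hS'
    by_contra hcon
    have hcon' : aggCost g c (Function.update σs i S') i < aggCost g c σs i := not_le.1 hcon
    set S := σs i with hSdef
    have hSmem : S ∈ 𝒮 i := hσsmem i
    set Imp : Finset (Finset E) :=
      (𝒮 i).filter (fun T => aggCost g c (Function.update σs i T) i < aggCost g c σs i)
      with hImp
    have hS'Imp : S' ∈ Imp := Finset.mem_filter.2 ⟨hS', hcon'⟩
    obtain ⟨T, hTImp, hTmin⟩ :=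
      Finset.exists_min_image Imp (fun T => (T \ S).card) ⟨S', hS'Imp⟩
    obtain ⟨hT, hTimp⟩ := Finset.mem_filter.1 hTImp
    have hcardS : S.card = r + 1 := hcard i S hSmem
    have hcardT : T.card = r + 1 := hcard i T hT
    have hTneS : T ≠ S := by
      rintro rfl
      rw [hSdef, Function.update_eq_self] at hTimp
      exact lt_irrefl _ hTimp
    have hSTne : (S \ T).Nonempty := by
      rw [Finset.sdiff_nonempty]
      intro hsub
      exact hTneS (Finset.eq_of_subset_of_card_le hsub (by omega)).symm
    set x : E → NNReal := fun e => c e (insert i ((playersOn σs e).erase i)) with hx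
    -- Key A : reverse exchanges yield strict increase
    have keyA : ∀ f ∈ T \ S, ∃ e ∈ S \ T, ltG g (x f) (x e) := by
      intro f hfTS
      obtain ⟨hfT, hfS⟩ := Finset.mem_sdiff.1 hfTS
      obtain ⟨e, heST, hU⟩ := (hmatroid i).2 T hT S hSmem f hfTS
      obtain ⟨heS, heT⟩ := Finset.mem_sdiff.1 heST
      set U := insert e (T.erase f) with hUdef
      have hUS : (U \ S) = (T \ S).erase f := by
        ext z
        simp only [hUdef, Finset.mem_sdiff, Finset.mem_erase, Finset.mem_insert]
        constructor
        · rintro ⟨hz1 | ⟨hz1, hz2⟩, hz3⟩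
          · exact absurd (hz1 ▸ heS) hz3
          · exact ⟨hz1, hz2, hz3⟩
        · rintro ⟨hz1, hz2, hz3⟩
          exact ⟨Or.inr ⟨hz1, hz2⟩, hz3⟩
      have hUScard : (U \ S).card < (T \ S).card := by
        rw [hUS, Finset.card_erase_of_mem hfTS]
        have : 0 < (T \ S).card := Finset.card_pos.2 ⟨f, hfTS⟩
        omega
      have hUnot : ¬ aggCost g c (Function.update σs i U) i < aggCost g c σs i := by
        intro hlt'
        have hmem : U ∈ Imp := Finset.mem_filter.2 ⟨hU, hlt'⟩
        have := hTmin U hmem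
        omega
      set lT := (T.erase f).toList with hlT
      set w : Fin r → NNReal := fun k =>
        if hk : (k : ℕ) < lT.length then x (lT.get ⟨k, hk⟩) else 0 with hwdef
      have hTi : (Function.update σs i T) i = T := Function.update_self _ _ _
      have hUi : (Function.update σs i U) i = U := Function.update_self _ _ _
      have hUe : U.erase e = T.erase f := by
        rw [hUdef, Finset.erase_insert (fun hz => heT (Finset.mem_of_mem_erase hz))]
      have hlenT : ((Function.update σs i T) i).toList.length = r + 1 := by
        rw [hTi, Finset.length_toList, hcardT]
      have hlenU : ((Function.update σs i U) i).toList.length = r + 1 := by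
        rw [hUi, Finset.length_toList, hcard i U hU]
      have hlistT : (((Function.update σs i T) i).erase f).toList = lT := by rw [hTi]
      have hlistU : (((Function.update σs i U) i).erase e).toList = lT := by
        rw [hUi, hUe]
      have hevalT : aggCost g c (Function.update σs i T) i = g (Fin.snoc w (x f)) := by
        have heval := aggCost_eval g hsym c (Function.update σs i T) i hlenT f
          (by rw [hTi]; exact hfT) w ?_
        · rw [heval, playersOn_update, if_pos hfT]
        · intro k
          have haux : ∀ (l : List E), l = lT → ∀ (hk : (k : ℕ) < l.length),
              w k = c (l.get ⟨k, hk⟩)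
                (playersOn (Function.update σs i T) (l.get ⟨k, hk⟩)) := by
            rintro l rfl hk
            have hmem : lT.get ⟨k, hk⟩ ∈ T.erase f := by
              rw [← Finset.mem_toList]; exact List.get_mem _ _
            rw [hwdef]
            simp only [dif_pos hk]
            rw [playersOn_update, if_pos (Finset.mem_of_mem_erase hmem)]
          exact haux _ hlistT
      have hevalU : aggCost g c (Function.update σs i U) i = g (Fin.snoc w (x e)) := by
        have heval := aggCost_eval g hsym c (Function.update σs i U) i hlenU e
          (by rw [hUi]; exact Finset.mem_insert_self _ _) w ?_
        · rw [heval, playersOn_update, if_pos (Finset.mem_insert_self _ _)]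
        · intro k
          have haux : ∀ (l : List E), l = lT → ∀ (hk : (k : ℕ) < l.length),
              w k = c (l.get ⟨k, hk⟩)
                (playersOn (Function.update σs i U) (l.get ⟨k, hk⟩)) := by
            rintro l rfl hk
            have hmem : lT.get ⟨k, hk⟩ ∈ T.erase f := by
              rw [← Finset.mem_toList]; exact List.get_mem _ _
            have hmemU : lT.get ⟨k, hk⟩ ∈ U := by
              rw [← hUe] at hmem
              exact Finset.mem_of_mem_erase hmem
            rw [hwdef]
            simp only [dif_pos hk]
            rw [playersOn_update, if_pos hmemU]
          exact haux _ hlistU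
      have hchain : g (Fin.snoc w (x f)) < g (Fin.snoc w (x e)) := by
        rw [← hevalT, ← hevalU]
        exact lt_of_lt_of_le hTimp (not_lt.1 hUnot)
      have hn : ¬ precG g (x e) (x f) := fun hp => absurd (hp w) (not_le.2 hchain)
      rcases hwm (x f) (x e) with h | h
      · exact ⟨e, heST, h, hn⟩
      · exact absurd h hn
    -- Key B : forward exchanges cannot strictly increase (potential minimality)
    have keyB : ∀ e ∈ S \ T, ∃ f ∈ T \ S, precG g (x e) (x f) := by
      intro e heST
      obtain ⟨heS, heT⟩ := Finset.mem_sdiff.1 heST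
      obtain ⟨f, hfTS, hV⟩ := (hmatroid i).2 S hSmem T hT e heST
      obtain ⟨hfT, hfS⟩ := Finset.mem_sdiff.1 hfTS
      refine ⟨f, hfTS, ?_⟩
      by_cases hp : precG g (x e) (x f)
      · exact hp
      exfalso
      have hp2 : precG g (x f) (x e) := (hwm (x e) (x f)).resolve_left hp
      have hltG : ltG g (x f) (x e) := ⟨hp2, hp⟩
      have hmemi : i ∈ playersOn σs e := by simp [playersOn, hSdef ▸ heS]
      have hnoti : i ∉ playersOn σs f := by simp [playersOn, hSdef ▸ hfS]
      have hxe : x e = c e (playersOn σs e) := by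
        rw [hx]
        simp only []
        rw [Finset.insert_erase hmemi]
      have hxf : x f = c f (insert i (playersOn σs f)) := by
        rw [hx]
        simp only []
        rw [Finset.erase_eq_of_notMem hnoti]
      rw [hxe, hxf] at hltG
      have hτA : Function.update σs i (insert f ((σs i).erase e)) ∈ A := by
        refine Finset.mem_filter.2 ⟨Finset.mem_univ _, ?_⟩
        intro j
        by_cases hj : j = i
        · subst hj
          rw [Function.update_self]
          exact hSdef ▸ hV
        · rw [Function.update_of_ne hj]
          exact hσsmem j
      exact hkey _ hτA
        (core_potential g hwm c hc σs i e f (hSdef ▸ heS) (hSdef ▸ hfS) hltG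
          (Pot σs) (Pot _) (hPotPerm _) (hPotSorted _) (hPotPerm _) (hPotSorted _))
    -- combine: an infinite strictly increasing chain in a finite set
    have hstep : ∀ e ∈ S \ T, ∃ e', e' ∈ S \ T ∧ ltG g (x e) (x e') := by
      intro e he
      obtain ⟨f, hfTS, hpef⟩ := keyB e he
      obtain ⟨e', he', hlt'⟩ := keyA f hfTS
      exact ⟨e', he', ltG_of_prec_of_lt g hpef hlt'⟩
    obtain ⟨e₀, he₀⟩ := hSTne
    set step : E → E := fun e => if h : e ∈ S \ T then (hstep e h).choose else e
      with hstepdef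
    set seqq : ℕ → E := fun n => step^[n] e₀ with hseq
    have hseqmem : ∀ n, seqq n ∈ S \ T := by
      intro n
      induction n with
      | zero => exact he₀
      | succ n ih =>
        show step^[n + 1] e₀ ∈ S \ T
        rw [Function.iterate_succ_apply']
        have : step (seqq n) = (hstep (seqq n) ih).choose := by
          rw [hstepdef]; exact dif_pos ih
        rw [show step^[n] e₀ = seqq n from rfl, this]
        exact (hstep (seqq n) ih).choose_spec.1
    have hseqlt : ∀ n, ltG g (x (seqq n)) (x (seqq (n + 1))) := by
      intro n
      have ih := hseqmem n
      show ltG g (x (step^[n] e₀)) (x (step^[n + 1] e₀))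
      rw [Function.iterate_succ_apply']
      have : step (seqq n) = (hstep (seqq n) ih).choose := by
        rw [hstepdef]; exact dif_pos ih
      rw [show step^[n] e₀ = seqq n from rfl, this]
      exact (hstep (seqq n) ih).choose_spec.2
    have hmono : ∀ m n, m < n → ltG g (x (seqq m)) (x (seqq n)) := by
      intro m n h
      induction n with
      | zero => omega
      | succ n ih =>
        rcases Nat.lt_succ_iff_lt_or_eq.1 h with h' | h'
        · exact ltG_of_prec_of_lt g (ih h').1 (hseqlt n)
        · subst h'
          exact hseqlt m
    obtain ⟨m, n, hmn, heq⟩ := Finite.exists_ne_map_eq_of_infinite seqq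
    rcases hmn.lt_or_gt with h | h
    · have := hmono m n h
      rw [heq] at this
      exact this.2 this.1
    · have := hmono n m h
      rw [← heq] at this
      exact this.2 this.1
end

section
/- Every singleton player-specific congestion game with mixed costs has a pure Nash equilibrium. -/
open Finset

/-- The number `n_e(σ)` of players choosing resource `e` in the strategy profile `σ`. -/
def numPlayersOn {N E : Type*} [Fintype N] [DecidableEq E]
    (σ : N → Finset E) (e : E) : ℕ :=
  (Finset.univ.filter (fun i => e ∈ σ i)).card

/-- The cost `γ_i(σ) = α_i · ∑_{e ∈ σ i} ℓ_{i,e}(n_e(σ)) + (1-α_i) · max_{e ∈ σ i} b_{i,e}(n_e(σ))`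
imposed on player `i` in a player-specific congestion game with mixed costs. -/
noncomputable def psMixedCost {N E : Type*} [Fintype N] [DecidableEq E]
    (ℓ b : N → E → ℕ → NNReal) (α : N → NNReal)
    (σ : N → Finset E) (i : N) : NNReal :=
  α i * (∑ e ∈ σ i, ℓ i e (numPlayersOn σ e)) +
    (1 - α i) * (σ i).sup (fun e => b i e (numPlayersOn σ e))

set_option linter.unusedSectionVars false

section Aux
variable {N E : Type*} [Fintype N] [DecidableEq N] [Fintype E] [DecidableEq E]

/-- Number of players in `P` choosing resource `e` under the singleton profile `ρ`. -/
def cgLoad (ρ : N → E) (P : Finset N) (e : E) : ℕ := (P.filter (fun j => ρ j = e)).card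

lemma cgLoad_congr {ρ ρ' : N → E} {P : Finset N} (h : ∀ j ∈ P, ρ j = ρ' j) (e : E) :
    cgLoad ρ P e = cgLoad ρ' P e := by
  unfold cgLoad
  congr 1
  exact Finset.filter_congr (fun j hj => by rw [h j hj])

lemma cgLoad_mono {ρ : N → E} {P Q : Finset N} (h : P ⊆ Q) (e : E) :
    cgLoad ρ P e ≤ cgLoad ρ Q e :=
  Finset.card_le_card (Finset.filter_subset_filter _ h)

lemma cgLoad_erase_of_ne {ρ : N → E} {P : Finset N} {j : N} {e : E} (h : ρ j ≠ e) :
    cgLoad ρ (P.erase j) e = cgLoad ρ P e := by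
  unfold cgLoad
  rw [Finset.filter_erase, Finset.erase_eq_of_notMem (by simp [h])]

lemma cgLoad_erase_of_mem {ρ : N → E} {P : Finset N} {j : N} {e : E}
    (hj : j ∈ P) (he : ρ j = e) :
    cgLoad ρ (P.erase j) e + 1 = cgLoad ρ P e := by
  unfold cgLoad
  rw [Finset.filter_erase, Finset.card_erase_of_mem (by simp [hj, he])]
  have : 0 < (P.filter (fun k => ρ k = e)).card :=
    Finset.card_pos.2 ⟨j, by simp [hj, he]⟩
  omega

lemma cgLoad_erase_eq {ρ : N → E} {P : Finset N} {j k : N}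
    (hj : j ∈ P) (hk : k ∈ P) (h : ρ j = ρ k) (e : E) :
    cgLoad ρ (P.erase j) e = cgLoad ρ (P.erase k) e := by
  by_cases he : ρ j = e
  · have h1 := cgLoad_erase_of_mem hj he
    have h2 := cgLoad_erase_of_mem hk (h ▸ he)
    omega
  · rw [cgLoad_erase_of_ne he, cgLoad_erase_of_ne (h ▸ he)]

/-- `ρ` is a pure Nash equilibrium of the singleton game restricted to the players in `P`. -/
def IsNE (c : N → E → ℕ → NNReal) (A : N → Finset E) (P : Finset N) (ρ : N → E) : Prop :=
  (∀ k ∈ P, ρ k ∈ A k) ∧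
  ∀ k ∈ P, ∀ f ∈ A k,
    c k (ρ k) (cgLoad ρ P (ρ k)) ≤ c k f (cgLoad ρ (P.erase k) f + 1)

/-- Inductive step: if the `P`-restricted game has a PNE, so has the game with one
more player `i`. (Milchtaich's argument, implemented by minimizing a potential over
states `(σ, j)` in which `σ` with `j` removed is a PNE of the smaller game and `j`
itself is happy.) -/
lemma NE_insert (c : N → E → ℕ → NNReal) (hc : ∀ i e, Monotone (c i e))
    (A : N → Finset E) (hA : ∀ i, (A i).Nonempty)
    {P : Finset N} {i : N} (hi : i ∉ P) {ρ : N → E} (hρ : IsNE c A P ρ) :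
    ∃ ρ', IsNE c A (insert i P) ρ' := by
  classical
  set P' : Finset N := insert i P with hP'
  set Good : Set ((N → E) × N) := { s | s.2 ∈ P' ∧ (∀ k ∈ P', s.1 k ∈ A k) ∧
    (∀ k ∈ P'.erase s.2, ∀ f ∈ A k,
      c k (s.1 k) (cgLoad s.1 (P'.erase s.2) (s.1 k)) ≤
        c k f (cgLoad s.1 ((P'.erase s.2).erase k) f + 1)) ∧
    (∀ f ∈ A s.2,
      c s.2 (s.1 s.2) (cgLoad s.1 P' (s.1 s.2)) ≤
        c s.2 f (cgLoad s.1 (P'.erase s.2) f + 1)) } with hGoodDef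
  set Φ : (N → E) × N → NNReal := fun s =>
    ∑ m ∈ P', c m (s.1 m) (cgLoad s.1 (P'.erase s.2) (s.1 m) + 1) with hΦ
  have hPmem : ∀ k ∈ P, k ≠ i := fun k hk h => hi (h ▸ hk)
  have hiP' : i ∈ P' := mem_insert_self _ _
  have herase : P'.erase i = P := erase_insert hi
  -- an initial state: add `i` at a best reply
  obtain ⟨e₁, he₁A, he₁min⟩ :=
    Finset.exists_min_image (A i) (fun f => c i f (cgLoad ρ P f + 1)) (hA i)
  set ρ₀ : N → E := Function.update ρ i e₁ with hρ₀
  have hρ₀i : ρ₀ i = e₁ := Function.update_self _ _ _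
  have hρ₀eq : ∀ j ∈ P, ρ₀ j = ρ j := fun j hj => Function.update_of_ne (hPmem j hj) _ _
  have hload₀ : ∀ Q : Finset N, Q ⊆ P → ∀ e, cgLoad ρ₀ Q e = cgLoad ρ Q e :=
    fun Q hQ e => cgLoad_congr (fun j hj => hρ₀eq j (hQ hj)) e
  have hs₀ : (ρ₀, i) ∈ Good := by
    refine ⟨hiP', ?_, ?_, ?_⟩
    · intro k hk
      dsimp only
      rcases mem_insert.1 hk with rfl | hk
      · rw [hρ₀i]; exact he₁A
      · rw [hρ₀eq k hk]; exact hρ.1 k hk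
    · intro k hk f hf
      dsimp only at hk ⊢
      rw [herase] at hk ⊢
      rw [hρ₀eq k hk, hload₀ P (Finset.Subset.refl P) _,
        hload₀ (P.erase k) (erase_subset _ _) _]
      exact hρ.2 k hk f hf
    · intro f hf
      dsimp only at hf ⊢
      rw [herase, hρ₀i]
      rw [hload₀ P (Finset.Subset.refl P) f]
      have hL : cgLoad ρ₀ P' e₁ = cgLoad ρ P e₁ + 1 := by
        rw [← cgLoad_erase_of_mem hiP' hρ₀i, herase, hload₀ P (Finset.Subset.refl P) e₁]
      rw [hL]
      exact he₁min f hf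
  -- take a state minimizing the potential
  obtain ⟨s, hsGood, hsmin⟩ := Set.exists_min_image Good Φ (Set.toFinite _) ⟨_, hs₀⟩
  obtain ⟨σ, j⟩ := s
  obtain ⟨hjP', hstrat, hsub, hhappy⟩ := hsGood
  dsimp only at hjP' hstrat hsub hhappy
  refine ⟨σ, hstrat, ?_⟩
  by_contra hbad
  push_neg at hbad
  obtain ⟨k, hkP', f₀, hf₀, hlt⟩ := hbad
  -- the unhappy player `k` is not the last mover `j`
  have hkj : k ≠ j := by
    rintro rfl
    exact absurd (hhappy f₀ hf₀) (not_le.2 hlt)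
  have hkQ : k ∈ P'.erase j := mem_erase.2 ⟨hkj, hkP'⟩
  -- the unhappy player `k` shares its resource with `j`
  have hσkj : σ k = σ j := by
    by_contra hne
    have h1 : cgLoad σ P' (σ k) = cgLoad σ (P'.erase j) (σ k) :=
      (cgLoad_erase_of_ne (fun h => hne h.symm)).symm
    have h2 := hsub k hkQ f₀ hf₀
    have h3 : c k f₀ (cgLoad σ ((P'.erase j).erase k) f₀ + 1) ≤
        c k f₀ (cgLoad σ (P'.erase k) f₀ + 1) := by
      apply hc
      have : (P'.erase j).erase k ⊆ P'.erase k :=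
        Finset.erase_subset_erase k (Finset.erase_subset j P')
      exact Nat.add_le_add_right (cgLoad_mono this f₀) 1
    rw [h1] at hlt
    exact absurd (h2.trans h3) (not_le.2 hlt)
  have hjQ : j ∈ P'.erase k := mem_erase.2 ⟨Ne.symm hkj, hjP'⟩
  have hjk_load : ∀ e, cgLoad σ (P'.erase j) e = cgLoad σ (P'.erase k) e :=
    cgLoad_erase_eq hjP' hkP' hσkj.symm
  -- let `k` move to its best reply
  obtain ⟨g, hgA, hgmin⟩ :=
    Finset.exists_min_image (A k) (fun f => c k f (cgLoad σ (P'.erase k) f + 1)) ⟨f₀, hf₀⟩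
  set σ' : N → E := Function.update σ k g with hσ'
  have hσ'k : σ' k = g := Function.update_self _ _ _
  have hσ'eq : ∀ m, m ≠ k → σ' m = σ m := fun m hm => Function.update_of_ne hm _ _
  have hload' : ∀ Q : Finset N, k ∉ Q → ∀ e, cgLoad σ' Q e = cgLoad σ Q e :=
    fun Q hQ e =>
      (cgLoad_congr (fun m hm => (hσ'eq m (fun h => hQ (h ▸ hm))).symm) e).symm
  have hkNQ : k ∉ P'.erase k := notMem_erase k P'
  have hs' : (σ', k) ∈ Good := by
    refine ⟨hkP', ?_, ?_, ?_⟩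
    · intro m hm
      dsimp only
      by_cases hmk : m = k
      · subst hmk; rw [hσ'k]; exact hgA
      · rw [hσ'eq m hmk]; exact hstrat m hm
    · -- the profile without `k` is a PNE of the smaller game
      intro m hm f hf
      dsimp only at hm hf ⊢
      have hmk : m ≠ k := (mem_erase.1 hm).1
      have hmP' : m ∈ P' := (mem_erase.1 hm).2
      have hkNQm : k ∉ (P'.erase k).erase m := fun h => hkNQ (mem_of_mem_erase h)
      rw [hσ'eq m hmk, hload' (P'.erase k) hkNQ, hload' ((P'.erase k).erase m) hkNQm]
      by_cases hmj : m = j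
      · subst hmj
        by_cases hfm : f = σ m
        · subst hfm
          have := cgLoad_erase_of_mem (ρ := σ) hjQ rfl
          rw [this]
        · have hL : cgLoad σ (P'.erase k) (σ m) ≤ cgLoad σ P' (σ m) :=
            cgLoad_mono (erase_subset _ _) _
          have h1 : c m (σ m) (cgLoad σ (P'.erase k) (σ m)) ≤
              c m (σ m) (cgLoad σ P' (σ m)) := hc _ _ hL
          have h2 := hhappy f hf
          have h3 : cgLoad σ (P'.erase m) f = cgLoad σ ((P'.erase k).erase m) f := by
            rw [Finset.erase_right_comm]
            exact (cgLoad_erase_of_ne (fun h => hfm (hσkj ▸ h).symm)).symm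
          rw [h3] at h2
          exact h1.trans h2
      · -- m differs from both j and k
        have hmQ : m ∈ P'.erase j := mem_erase.2 ⟨hmj, hmP'⟩
        have h1 := hsub m hmQ f hf
        have h2 : cgLoad σ (P'.erase j) (σ m) = cgLoad σ (P'.erase k) (σ m) :=
          hjk_load _
        have h3 : cgLoad σ ((P'.erase j).erase m) f = cgLoad σ ((P'.erase k).erase m) f := by
          rw [Finset.erase_right_comm (s := P') (a := j) (b := m),
            Finset.erase_right_comm (s := P') (a := k) (b := m)]
          exact cgLoad_erase_eq (mem_erase.2 ⟨Ne.symm hmj, hjP'⟩ : j ∈ P'.erase m)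
            (mem_erase.2 ⟨Ne.symm hmk, hkP'⟩ : k ∈ P'.erase m) hσkj.symm f
        rw [h2, h3] at h1
        exact h1
    · -- `k` is happy after moving
      intro f hf
      dsimp only at hf ⊢
      rw [hσ'k]
      have hL : cgLoad σ' P' g = cgLoad σ (P'.erase k) g + 1 := by
        rw [← cgLoad_erase_of_mem hkP' hσ'k, hload' (P'.erase k) hkNQ]
      rw [hL, hload' (P'.erase k) hkNQ]
      exact hgmin f hf
  -- the potential strictly decreases, contradicting minimality
  have hΦlt : Φ (σ', k) < Φ (σ, j) := by
    rw [hΦ]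
    dsimp only
    apply Finset.sum_lt_sum
    · intro m hm
      by_cases hmk : m = k
      · rw [hmk, hσ'k, hload' (P'.erase k) hkNQ]
        have h2 : cgLoad σ (P'.erase j) (σ k) + 1 = cgLoad σ P' (σ k) :=
          cgLoad_erase_of_mem hjP' hσkj.symm
        rw [h2]
        exact (hgmin f₀ hf₀).trans (le_of_lt hlt)
      · rw [hσ'eq m hmk, hload' (P'.erase k) hkNQ, hjk_load]
    · refine ⟨k, hkP', ?_⟩
      rw [hσ'k, hload' (P'.erase k) hkNQ]
      have h2 : cgLoad σ (P'.erase j) (σ k) + 1 = cgLoad σ P' (σ k) :=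
        cgLoad_erase_of_mem hjP' hσkj.symm
      rw [h2]
      exact lt_of_le_of_lt (hgmin f₀ hf₀) hlt
  exact absurd (hsmin _ hs') (not_le.2 hΦlt)

/-- Every restricted singleton game with monotone player-specific costs has a PNE. -/
lemma exists_NE (c : N → E → ℕ → NNReal) (hc : ∀ i e, Monotone (c i e))
    (A : N → Finset E) (hA : ∀ i, (A i).Nonempty) (P : Finset N) :
    ∃ ρ : N → E, IsNE c A P ρ := by
  classical
  induction P using Finset.induction_on with
  | empty =>
    exact ⟨fun i => (hA i).choose,
      fun k hk => absurd hk (notMem_empty k),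
      fun k hk => absurd hk (notMem_empty k)⟩
  | insert _ _ hi ih =>
    obtain ⟨ρ, hρ⟩ := ih
    exact NE_insert c hc A hA hi hρ

end Aux

/-- Every singleton player-specific congestion game with mixed costs has a pure
Nash equilibrium. -/
theorem singleton_player_specific_congestion_game_mixed_costs_has_PNE
    {N E : Type*} [Fintype N] [DecidableEq N] [Fintype E] [DecidableEq E]
    (𝒮 : N → Finset (Finset E)) (hne : ∀ i, (𝒮 i).Nonempty)
    (hsingleton : ∀ i, ∀ S ∈ 𝒮 i, S.card = 1)
    (ℓ b : N → E → ℕ → NNReal)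
    (hℓ : ∀ i e, Monotone (ℓ i e)) (hb : ∀ i e, Monotone (b i e))
    (α : N → NNReal) (hα : ∀ i, α i ≤ 1) :
    ∃ σ : N → Finset E, (∀ i, σ i ∈ 𝒮 i) ∧
      ∀ i : N, ∀ S' ∈ 𝒮 i,
        psMixedCost ℓ b α σ i ≤ psMixedCost ℓ b α (Function.update σ i S') i := by
  classical
  set c : N → E → ℕ → NNReal := fun i e k => α i * ℓ i e k + (1 - α i) * b i e k with hc_def
  have hc : ∀ i e, Monotone (c i e) := fun i e k k' h =>
    add_le_add (mul_le_mul_right (hℓ i e h) _) (mul_le_mul_right (hb i e h) _)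
  set A : N → Finset E := fun i => (𝒮 i).biUnion id with hA_def
  have hAmem : ∀ i e, e ∈ A i ↔ ({e} : Finset E) ∈ 𝒮 i := by
    intro i e
    constructor
    · intro h
      obtain ⟨S, hS, heS⟩ := Finset.mem_biUnion.1 h
      obtain ⟨a, rfl⟩ := Finset.card_eq_one.1 (hsingleton i S hS)
      simp only [id_eq, Finset.mem_singleton] at heS
      subst heS
      exact hS
    · intro h
      exact Finset.mem_biUnion.2 ⟨{e}, h, Finset.mem_singleton_self e⟩
  have hA : ∀ i, (A i).Nonempty := by
    intro i
    obtain ⟨S, hS⟩ := hne i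
    obtain ⟨a, rfl⟩ := Finset.card_eq_one.1 (hsingleton i S hS)
    exact ⟨a, (hAmem i a).2 hS⟩
  obtain ⟨ρ, hstrat, hNE⟩ := exists_NE c hc A hA Finset.univ
  refine ⟨fun k => {ρ k}, fun k => (hAmem k (ρ k)).1 (hstrat k (Finset.mem_univ k)), ?_⟩
  intro i S' hS'
  obtain ⟨f, rfl⟩ := Finset.card_eq_one.1 (hsingleton i S' hS')
  have hfA : f ∈ A i := (hAmem i f).2 hS'
  have hnum : ∀ (τ : N → E) (e : E),
      numPlayersOn (fun k => ({τ k} : Finset E)) e = cgLoad τ Finset.univ e := by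
    intro τ e
    unfold numPlayersOn cgLoad
    congr 1
    apply Finset.filter_congr
    intro x _
    simp [eq_comm]
  have hupd : Function.update (fun k => ({ρ k} : Finset E)) i {f}
      = fun k => ({Function.update ρ i f k} : Finset E) := by
    funext k
    by_cases hk : k = i
    · subst hk; simp
    · simp [Function.update_of_ne hk]
  have hLHS : psMixedCost ℓ b α (fun k => ({ρ k} : Finset E)) i
      = c i (ρ i) (cgLoad ρ Finset.univ (ρ i)) := by
    simp only [psMixedCost, Finset.sum_singleton, Finset.sup_singleton, hnum, hc_def]
  have hRHS : psMixedCost ℓ b α (Function.update (fun k => ({ρ k} : Finset E)) i {f}) i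
      = c i f (cgLoad (Function.update ρ i f) Finset.univ f) := by
    rw [hupd]
    simp only [psMixedCost, hnum]
    rw [Function.update_self]
    simp only [Finset.sum_singleton, Finset.sup_singleton, hc_def]
  rw [hLHS, hRHS]
  have hτ : cgLoad (Function.update ρ i f) Finset.univ f
      = cgLoad ρ (Finset.univ.erase i) f + 1 := by
    rw [← cgLoad_erase_of_mem (Finset.mem_univ i) (Function.update_self i f ρ)]
    congr 1
    exact cgLoad_congr (fun j hj => Function.update_of_ne (Finset.mem_erase.1 hj).1 _ _) f
  rw [hτ]
  exact hNE i (Finset.mem_univ i) f hfA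
end

section
/- Every player-specific matroid congestion game with mixed costs in which α_i ∈ {0,1} holds for each player i has a pure Nash equilibrium. -/
open Finset

set_option linter.unusedSectionVars false
set_option maxHeartbeats 2000000

namespace PNEaux

variable {E : Type*} [DecidableEq E]

/-- Independent sets of the matroid with base family `B`. -/
def Ind (B : Finset (Finset E)) (S : Finset E) : Prop := ∃ b ∈ B, S ⊆ b

lemma Ind.mono {B : Finset (Finset E)} {S T : Finset E} (h : Ind B T) (hs : S ⊆ T) :
    Ind B S := by
  obtain ⟨b, hb, hTb⟩ := h
  exact ⟨b, hb, hs.trans hTb⟩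

lemma ind_of_mem {B : Finset (Finset E)} {S : Finset E} (h : S ∈ B) : Ind B S :=
  ⟨S, h, Finset.Subset.refl S⟩

/-- All bases have the same cardinality. -/
lemma base_card_eq {B : Finset (Finset E)} (hB : IsBaseFamily B) :
    ∀ S ∈ B, ∀ S' ∈ B, S.card = S'.card := by
  suffices h : ∀ n : ℕ, ∀ S ∈ B, ∀ S' ∈ B, (S \ S').card = n → S.card = S'.card by
    intro S hS S' hS'
    exact h _ S hS S' hS' rfl
  intro n
  induction n with
  | zero =>
    intro S hS S' hS' hcard
    have hsub : S ⊆ S' := by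
      rw [Finset.card_eq_zero, Finset.sdiff_eq_empty_iff_subset] at hcard
      exact hcard
    have hsub' : S' ⊆ S := by
      by_contra hcon
      obtain ⟨e, heS', heS⟩ := Finset.not_subset.mp hcon
      obtain ⟨f, hf, -⟩ := hB.2 S' hS' S hS e (Finset.mem_sdiff.mpr ⟨heS', heS⟩)
      rw [Finset.mem_sdiff] at hf
      exact hf.2 (hsub hf.1)
    rw [Finset.Subset.antisymm hsub hsub']
  | succ n ih =>
    intro S hS S' hS' hcard
    have hne : (S \ S').Nonempty := by
      rw [← Finset.card_pos, hcard]; omega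
    obtain ⟨e, he⟩ := hne
    obtain ⟨f, hf, hS2⟩ := hB.2 S hS S' hS' e he
    rw [Finset.mem_sdiff] at he hf
    have hfe : f ∉ S.erase e := fun h => hf.2 (Finset.mem_of_mem_erase h)
    have hcard2 : (insert f (S.erase e)).card = S.card := by
      rw [Finset.card_insert_of_notMem hfe, Finset.card_erase_of_mem he.1]
      have : 1 ≤ S.card := Finset.card_pos.mpr ⟨e, he.1⟩
      omega
    have hdiff : insert f (S.erase e) \ S' = (S \ S').erase e := by
      ext x
      simp only [Finset.mem_sdiff, Finset.mem_insert, Finset.mem_erase]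
      constructor
      · rintro ⟨hx1 | ⟨hx1, hx2⟩, hx3⟩
        · exact absurd (hx1 ▸ hf.1) hx3
        · exact ⟨hx1, hx2, hx3⟩
      · rintro ⟨hx1, hx2, hx3⟩
        exact ⟨Or.inr ⟨hx1, hx2⟩, hx3⟩
    have hdc : (insert f (S.erase e) \ S').card = n := by
      rw [hdiff, Finset.card_erase_of_mem (Finset.mem_sdiff.mpr he), hcard]
      omega
    have := ih (insert f (S.erase e)) hS2 S' hS' hdc
    omega

/-- Basis completion inside a union: for independent `I` and a basis `b`,
there is a basis between `I` and `I ∪ b`. -/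
lemma exists_base_between {B : Finset (Finset E)} (hB : IsBaseFamily B)
    {I b : Finset E} (hI : Ind B I) (hb : b ∈ B) :
    ∃ b' ∈ B, I ⊆ b' ∧ b' ⊆ I ∪ b := by
  obtain ⟨b0, hb0, hIb0⟩ := hI
  suffices h : ∀ n : ℕ, ∀ b' ∈ B, I ⊆ b' → (b' \ (I ∪ b)).card = n →
      ∃ b'' ∈ B, I ⊆ b'' ∧ b'' ⊆ I ∪ b by
    exact h _ b0 hb0 hIb0 rfl
  intro n
  induction n with
  | zero =>
    intro b' hb' hIb' hcard
    refine ⟨b', hb', hIb', ?_⟩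
    rwa [Finset.card_eq_zero, Finset.sdiff_eq_empty_iff_subset] at hcard
  | succ n ih =>
    intro b' hb' hIb' hcard
    have hne : (b' \ (I ∪ b)).Nonempty := by
      rw [← Finset.card_pos, hcard]; omega
    obtain ⟨e, he⟩ := hne
    rw [Finset.mem_sdiff, Finset.mem_union, not_or] at he
    obtain ⟨f, hf, hb2⟩ := hB.2 b' hb' b hb e (Finset.mem_sdiff.mpr ⟨he.1, he.2.2⟩)
    rw [Finset.mem_sdiff] at hf
    refine ih (insert f (b'.erase e)) hb2 ?_ ?_
    · intro x hx
      exact Finset.mem_insert.mpr (Or.inr (Finset.mem_erase.mpr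
        ⟨fun h => he.2.1 (h ▸ hx), hIb' hx⟩))
    · have hdiff : insert f (b'.erase e) \ (I ∪ b) = (b' \ (I ∪ b)).erase e := by
        ext x
        simp only [Finset.mem_sdiff, Finset.mem_insert, Finset.mem_erase, Finset.mem_union]
        constructor
        · rintro ⟨hx1 | ⟨hx1, hx2⟩, hx3⟩
          · exact absurd (Or.inr (hx1 ▸ hf.1)) hx3
          · exact ⟨hx1, hx2, hx3⟩
        · rintro ⟨hx1, hx2, hx3⟩
          exact ⟨Or.inr ⟨hx1, hx2⟩, hx3⟩
      rw [hdiff, Finset.card_erase_of_mem (Finset.mem_sdiff.mpr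
        ⟨he.1, by rw [Finset.mem_union]; exact fun h => h.elim he.2.1 he.2.2⟩), hcard]
      omega

/-- Independence augmentation. -/
lemma aug {B : Finset (Finset E)} (hB : IsBaseFamily B)
    {I J : Finset E} (hI : Ind B I) (hJ : Ind B J) (hc : I.card < J.card) :
    ∃ f ∈ J, f ∉ I ∧ Ind B (insert f I) := by
  obtain ⟨bJ, hbJ, hJbJ⟩ := hJ
  obtain ⟨b0, hb0, hIb0, hb0sub⟩ := exists_base_between hB hI hbJ
  by_contra hcon
  push_neg at hcon
  have hJb0 : J ∩ b0 ⊆ I ∩ J := by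
    intro x hx
    rw [Finset.mem_inter] at hx
    rw [Finset.mem_inter]
    refine ⟨?_, hx.1⟩
    by_contra hxI
    exact hcon x hx.1 hxI ((ind_of_mem hb0).mono (Finset.insert_subset hx.2 hIb0))
  have h1 : b0 \ bJ = I \ bJ := by
    ext x
    simp only [Finset.mem_sdiff]
    constructor
    · rintro ⟨hx1, hx2⟩
      rcases Finset.mem_union.mp (hb0sub hx1) with h | h
      · exact ⟨h, hx2⟩
      · exact absurd h hx2
    · rintro ⟨hx1, hx2⟩
      exact ⟨hIb0 hx1, hx2⟩
  have hcards : b0.card = bJ.card := base_card_eq hB b0 hb0 bJ hbJ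
  have e1 : (b0 \ bJ).card + (b0 ∩ bJ).card = b0.card := Finset.card_sdiff_add_card_inter b0 bJ
  have e2 : (bJ \ b0).card + (bJ ∩ b0).card = bJ.card := Finset.card_sdiff_add_card_inter bJ b0
  have e3 : (b0 ∩ bJ).card = (bJ ∩ b0).card := by rw [Finset.inter_comm]
  have h2 : (b0 \ bJ).card = (bJ \ b0).card := by omega
  have e4 : (J ∩ b0).card + (J \ b0).card = J.card := Finset.card_inter_add_card_sdiff J b0
  have e5 : (J \ b0).card ≤ (bJ \ b0).card :=
    Finset.card_le_card (fun x hx => by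
      rw [Finset.mem_sdiff] at hx ⊢; exact ⟨hJbJ hx.1, hx.2⟩)
  have e6 : (J ∩ b0).card ≤ (I ∩ J).card := Finset.card_le_card hJb0
  have e7 : (I \ bJ).card ≤ (I \ J).card :=
    Finset.card_le_card (fun x hx => by
      rw [Finset.mem_sdiff] at hx ⊢; exact ⟨hx.1, fun h => hx.2 (hJbJ h)⟩)
  have e8 : (I ∩ J).card + (I \ J).card = I.card := Finset.card_inter_add_card_sdiff I J
  have e9 : (b0 \ bJ).card = (I \ bJ).card := by rw [h1]
  omega

/-- Augmentation chain: extend an independent set to any size `s ≤ J.card` inside `I ∪ J`. -/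
lemma aug_chain {B : Finset (Finset E)} (hB : IsBaseFamily B) :
    ∀ (n : ℕ) {I J : Finset E}, Ind B I → Ind B J → I.card + n ≤ J.card →
    ∃ K, Ind B K ∧ I ⊆ K ∧ K ⊆ I ∪ J ∧ K.card = I.card + n := by
  intro n
  induction n with
  | zero =>
    intro I J hI hJ h
    exact ⟨I, hI, Finset.Subset.refl I, Finset.subset_union_left, by omega⟩
  | succ n ih =>
    intro I J hI hJ h
    obtain ⟨f, hfJ, hfI, hIf⟩ := aug hB hI hJ (by omega)
    obtain ⟨K, hK1, hK2, hK3, hK4⟩ := ih hIf hJ (by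
      rw [Finset.card_insert_of_notMem hfI]; omega)
    refine ⟨K, hK1, fun x hx => hK2 (Finset.mem_insert_of_mem hx), ?_, by
      rw [hK4, Finset.card_insert_of_notMem hfI]; omega⟩
    intro x hx
    rcases Finset.mem_union.mp (hK3 hx) with h' | h'
    · rcases Finset.mem_insert.mp h' with h'' | h''
      · exact Finset.mem_union_right _ (h'' ▸ hfJ)
      · exact Finset.mem_union_left _ h''
    · exact Finset.mem_union_right _ h'

/-- If no element of `Y` extends the independent set `A`, then every independent subset
of `A ∪ Y` has size at most `A.card`. -/
lemma noext {B : Finset (Finset E)} (hB : IsBaseFamily B)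
    {A Y : Finset E} (hA : Ind B A)
    (h : ∀ y ∈ Y, y ∉ A → ¬ Ind B (insert y A)) :
    ∀ W, Ind B W → W ⊆ A ∪ Y → W.card ≤ A.card := by
  intro W hW hWsub
  by_contra hcon
  push_neg at hcon
  obtain ⟨f, hfW, hfA, hIf⟩ := aug hB hA hW hcon
  rcases Finset.mem_union.mp (hWsub hfW) with h' | h'
  · exact hfA h'
  · exact h f h' hfA hIf

open Classical in
/-- Symmetric (bilateral) exchange for equal-size independent sets. -/
lemma sym_exchange {B : Finset (Finset E)} (hB : IsBaseFamily B)
    {S T : Finset E} (hS : Ind B S) (hT : Ind B T) (hcard : S.card = T.card)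
    {t : E} (htS : t ∈ S) (htT : t ∉ T) :
    ∃ f ∈ T, f ∉ S ∧ Ind B (insert f (S.erase t)) ∧ Ind B (insert t (T.erase f)) := by
  classical
  set A := S.erase t with hA
  have hAind : Ind B A := hS.mono (Finset.erase_subset t S)
  have hAcard : A.card + 1 = S.card := by
    rw [hA, Finset.card_erase_of_mem htS]
    have : 1 ≤ S.card := Finset.card_pos.mpr ⟨t, htS⟩
    omega
  by_cases hTt : Ind B (insert t T)
  · -- easy case
    obtain ⟨f, hfT, hfA, hfind⟩ := aug hB hAind hT (by omega)
    have hft : f ≠ t := fun h => htT (h ▸ hfT)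
    refine ⟨f, hfT, ?_, hfind, ?_⟩
    · intro hfS
      exact hfA (Finset.mem_erase.mpr ⟨hft, hfS⟩)
    · exact hTt.mono (by
        intro x hx
        rcases Finset.mem_insert.mp hx with h | h
        · exact h ▸ Finset.mem_insert_self t T
        · exact Finset.mem_insert_of_mem (Finset.mem_of_mem_erase h))
  · -- main case
    set F := T.filter (fun f => Ind B (insert t (T.erase f))) with hF
    have hFT : F ⊆ T := Finset.filter_subset _ _
    have hFind : Ind B F := hT.mono hFT
    have htF : t ∉ F := fun h => htT (hFT h)
    -- Claim 2a : insert t F is dependent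
    have h2a : ¬ Ind B (insert t F) := by
      intro hind
      have hFne : F ≠ T := by
        intro h
        rw [h] at hind
        exact hTt hind
      have hFcard : F.card < T.card := Finset.card_lt_card (Finset.ssubset_iff_subset_ne.mpr ⟨hFT, hFne⟩)
      have hins : (insert t F).card = F.card + 1 := Finset.card_insert_of_notMem htF
      obtain ⟨K, hKind, hKsup, hKsub, hKcard⟩ := aug_chain hB (T.card - (F.card + 1)) hind hT (by omega)
      have hKcard' : K.card = T.card := by omega
      have hKsubT : K ⊆ insert t T := by
        intro x hx
        rcases Finset.mem_union.mp (hKsub hx) with h | h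
        · rcases Finset.mem_insert.mp h with h' | h'
          · exact h' ▸ Finset.mem_insert_self t T
          · exact Finset.mem_insert_of_mem (hFT h')
        · exact Finset.mem_insert_of_mem h
      have htK : t ∈ K := hKsup (Finset.mem_insert_self t F)
      have hcard1 : ((insert t T) \ K).card = 1 := by
        rw [Finset.card_sdiff_of_subset hKsubT, Finset.card_insert_of_notMem htT]
        omega
      obtain ⟨f₀, hf₀⟩ := Finset.card_eq_one.mp hcard1
      have hf₀mem : f₀ ∈ insert t T ∧ f₀ ∉ K := by
        have : f₀ ∈ (insert t T) \ K := hf₀ ▸ Finset.mem_singleton_self f₀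
        exact Finset.mem_sdiff.mp this
      have hf₀t : f₀ ≠ t := fun h => hf₀mem.2 (h ▸ htK)
      have hf₀T : f₀ ∈ T := by
        rcases Finset.mem_insert.mp hf₀mem.1 with h | h
        · exact absurd h hf₀t
        · exact h
      have hf₀F : f₀ ∉ F := fun h => hf₀mem.2 (hKsup (Finset.mem_insert_of_mem h))
      have hKeq : K = insert t (T.erase f₀) := by
        apply Finset.eq_of_subset_of_card_le
        · intro x hx
          have hxT : x ∈ insert t T := hKsubT hx
          have hxf₀ : x ≠ f₀ := fun h => hf₀mem.2 (h ▸ hx)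
          rcases Finset.mem_insert.mp hxT with h | h
          · exact h ▸ Finset.mem_insert_self _ _
          · exact Finset.mem_insert_of_mem (Finset.mem_erase.mpr ⟨hxf₀, h⟩)
        · rw [Finset.card_insert_of_notMem (fun h => htT (Finset.mem_of_mem_erase h)),
            Finset.card_erase_of_mem hf₀T]
          have : 1 ≤ T.card := Finset.card_pos.mpr ⟨f₀, hf₀T⟩
          omega
      have : f₀ ∈ F := Finset.mem_filter.mpr ⟨hf₀T, hKeq ▸ hKind⟩
      exact hf₀F this
    -- Claim 2b : some f ∈ F works
    by_contra hcon
    push_neg at hcon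
    have hnoext : ∀ y ∈ F, y ∉ A → ¬ Ind B (insert y A) := by
      intro y hyF hyA hind
      have hyT : y ∈ T := hFT hyF
      have hyS : y ∉ S := by
        intro hyS
        exact hyA (Finset.mem_erase.mpr ⟨fun h => htT (h ▸ hyT), hyS⟩)
      exact hcon y hyT hyS hind (Finset.mem_filter.mp hyF).2
    have hFcard : F.card ≤ T.card := Finset.card_le_card hFT
    obtain ⟨K, hKind, hKsup, hKsub, hKcard⟩ := aug_chain hB (S.card - F.card) hFind hS (by omega)
    have hKcard' : K.card = S.card := by omega
    by_cases htK : t ∈ K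
    · exact h2a (hKind.mono (Finset.insert_subset htK hKsup))
    · have hKsubAF : K ⊆ A ∪ F := by
        intro x hx
        rcases Finset.mem_union.mp (hKsub hx) with h | h
        · exact Finset.mem_union_right _ h
        · exact Finset.mem_union_left _ (Finset.mem_erase.mpr
            ⟨fun he => htK (he ▸ hx), h⟩)
      have := noext hB hAind hnoext K hKind (by
        intro x hx
        rcases Finset.mem_union.mp (hKsubAF hx) with h | h
        · exact Finset.mem_union_left _ h
        · exact Finset.mem_union_right _ h)
      omega


end PNEaux

namespace PNEaux
variable {E : Type*} [DecidableEq E]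

/-- Lowering the weight of one element of a minimizer preserves minimality. -/
lemma min_of_lower {α : Type*} [DecidableEq α] (P : Finset α → Prop)
    (w w' : α → NNReal) (S : Finset α) (x : α) (hx : x ∈ S)
    (hle : w' x ≤ w x) (heq : ∀ e, e ≠ x → w' e = w e)
    (hmin : ∀ T, P T → ∑ e ∈ S, w e ≤ ∑ e ∈ T, w e) :
    ∀ T, P T → ∑ e ∈ S, w' e ≤ ∑ e ∈ T, w' e := by
  intro T hT
  set d := w x - w' x with hd
  have hwx : w' x + d = w x := by
    rw [hd]
    exact add_tsub_cancel_of_le hle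
  have hS : ∑ e ∈ S, w e = (∑ e ∈ S, w' e) + d := by
    rw [← Finset.sum_erase_add S w hx, ← Finset.sum_erase_add S w' hx]
    rw [Finset.sum_congr rfl (fun e he => (heq e (Finset.ne_of_mem_erase he)).symm)]
    rw [add_assoc, hwx]
  by_cases hxT : x ∈ T
  · have hT' : ∑ e ∈ T, w e = (∑ e ∈ T, w' e) + d := by
      rw [← Finset.sum_erase_add T w hxT, ← Finset.sum_erase_add T w' hxT]
      rw [Finset.sum_congr rfl (fun e he => (heq e (Finset.ne_of_mem_erase he)).symm)]
      rw [add_assoc, hwx]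
    have := hmin T hT
    rw [hS, hT'] at this
    exact le_of_add_le_add_right this
  · have hT' : ∑ e ∈ T, w e = ∑ e ∈ T, w' e := by
      exact Finset.sum_congr rfl (fun e he => (heq e (fun h => hxT (h ▸ he))).symm)
    have h1 : (∑ e ∈ S, w' e) + d ≤ ∑ e ∈ T, w' e := by
      rw [← hS, ← hT']; exact hmin T hT
    exact le_trans (le_add_right le_rfl) h1

end PNEaux

namespace PNEgame
open PNEaux
variable {N E : Type*} [Fintype N] [DecidableEq N] [Fintype E] [DecidableEq E]

/-- Number of players other than `i` using `e`. -/
def othersOn (σ : N → Finset E) (i : N) (e : E) : ℕ :=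
  (Finset.univ.filter (fun j => j ≠ i ∧ e ∈ σ j)).card

lemma numPlayersOn_split (σ : N → Finset E) (i : N) (e : E) :
    numPlayersOn σ e = othersOn σ i e + (if e ∈ σ i then 1 else 0) := by
  have hsplit : Finset.univ.filter (fun j => e ∈ σ j) =
      (Finset.univ.filter (fun j => j ≠ i ∧ e ∈ σ j)) ∪
      (Finset.univ.filter (fun j => j = i ∧ e ∈ σ j)) := by
    ext j
    simp only [Finset.mem_filter, Finset.mem_union, Finset.mem_univ, true_and]
    by_cases h : j = i <;> tauto
  have hdisj : Disjoint (Finset.univ.filter (fun j => j ≠ i ∧ e ∈ σ j))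
      (Finset.univ.filter (fun j => j = i ∧ e ∈ σ j)) := by
    rw [Finset.disjoint_left]
    intro a ha hb
    rw [Finset.mem_filter] at ha hb
    exact ha.2.1 hb.2.1
  have hsecond : (Finset.univ.filter (fun j => j = i ∧ e ∈ σ j)).card
      = if e ∈ σ i then 1 else 0 := by
    by_cases h : e ∈ σ i
    · rw [if_pos h]
      have : Finset.univ.filter (fun j => j = i ∧ e ∈ σ j) = {i} := by
        ext j
        simp only [Finset.mem_filter, Finset.mem_univ, true_and, Finset.mem_singleton]
        constructor
        · exact fun hj => hj.1
        · rintro rfl; exact ⟨rfl, h⟩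
      rw [this, Finset.card_singleton]
    · rw [if_neg h]
      rw [Finset.card_eq_zero]
      ext j
      simp only [Finset.mem_filter, Finset.mem_univ, true_and, Finset.notMem_empty,
        iff_false, not_and]
      rintro rfl; exact h
  rw [numPlayersOn, hsplit, Finset.card_union_of_disjoint hdisj, hsecond, othersOn]

lemma othersOn_update_self (σ : N → Finset E) (i : N) (S : Finset E) :
    othersOn (Function.update σ i S) i = othersOn σ i := by
  funext e
  unfold othersOn
  congr 1
  apply Finset.filter_congr
  intro j _
  by_cases h : j = i
  · simp [h]
  · simp [h, Function.update_of_ne h]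

lemma numPlayersOn_update (σ : N → Finset E) (i : N) (S : Finset E) (e : E) :
    numPlayersOn (Function.update σ i S) e = othersOn σ i e + (if e ∈ S then 1 else 0) := by
  rw [numPlayersOn_split (Function.update σ i S) i, othersOn_update_self,
    Function.update_self]

lemma stage (𝒮 : N → Finset (Finset E)) (hmatroid : ∀ i, IsBaseFamily (𝒮 i))
    (c : N → E → ℕ → NNReal) (hc : ∀ i e, Monotone (c i e)) :
    ∀ (n : ℕ) (k : N → ℕ), (∑ i, k i) = n → (∀ i, ∃ b ∈ 𝒮 i, k i ≤ b.card) →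
    ∃ σ : N → Finset E, (∀ i, Ind (𝒮 i) (σ i) ∧ (σ i).card = k i) ∧
      (∀ i, ∀ T, Ind (𝒮 i) T → T.card = k i →
        ∑ e ∈ σ i, c i e (othersOn σ i e + 1) ≤ ∑ e ∈ T, c i e (othersOn σ i e + 1)) := by
  classical
  intro n
  induction n with
  | zero =>
    intro k hsum _
    have hk0 : ∀ i, k i = 0 := by
      intro i
      exact (Finset.sum_eq_zero_iff).mp hsum i (Finset.mem_univ i)
    refine ⟨fun _ => ∅, fun i => ⟨?_, by simp [hk0 i]⟩, ?_⟩
    · obtain ⟨b, hb⟩ := (hmatroid i).1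
      exact ⟨b, hb, Finset.empty_subset b⟩
    · intro i T _ hTcard
      rw [hk0 i] at hTcard
      rw [Finset.card_eq_zero.mp hTcard]
  | succ n ih =>
    intro k hsum hk
    -- pick a player with positive remaining rank
    have hex : ∃ i₀, k i₀ ≠ 0 := by
      by_contra hcon
      push_neg at hcon
      rw [Finset.sum_eq_zero (fun i _ => hcon i)] at hsum
      omega
    obtain ⟨i₀, hi₀⟩ := hex
    set k' : N → ℕ := Function.update k i₀ (k i₀ - 1) with hk'def
    have hsum' : (∑ i, k' i) = n := by
      have h1 : (∑ i, k' i) = ∑ i ∈ Finset.univ \ {i₀}, k' i + k' i₀ :=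
        Finset.sum_eq_sum_sdiff_singleton_add (Finset.mem_univ i₀) k'
      have h2 : (∑ i, k i) = ∑ i ∈ Finset.univ \ {i₀}, k i + k i₀ :=
        Finset.sum_eq_sum_sdiff_singleton_add (Finset.mem_univ i₀) k
      have h3 : ∑ i ∈ Finset.univ \ {i₀}, k' i = ∑ i ∈ Finset.univ \ {i₀}, k i := by
        apply Finset.sum_congr rfl
        intro i hi
        rw [Finset.mem_sdiff, Finset.mem_singleton] at hi
        rw [hk'def, Function.update_of_ne hi.2]
      have h4 : k' i₀ = k i₀ - 1 := by rw [hk'def, Function.update_self]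
      omega
    have hk'le : ∀ i, ∃ b ∈ 𝒮 i, k' i ≤ b.card := by
      intro i
      obtain ⟨b, hb, hbc⟩ := hk i
      refine ⟨b, hb, ?_⟩
      by_cases h : i = i₀
      · subst h; rw [hk'def, Function.update_self]; omega
      · rw [hk'def, Function.update_of_ne h]; exact hbc
    obtain ⟨σ', hσ'ic, hσ'opt⟩ := ih k' hsum' hk'le
    set S0 := σ' i₀ with hS0
    have hS0ind : Ind (𝒮 i₀) S0 := (hσ'ic i₀).1
    have hS0card : S0.card = k i₀ - 1 := by
      have := (hσ'ic i₀).2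
      rwa [hk'def, Function.update_self] at this
    set β : E → ℕ := numPlayersOn σ' with hβ
    -- the set of legal extensions of S0
    set X : Finset E := Finset.univ.filter
      (fun e => e ∉ S0 ∧ Ind (𝒮 i₀) (insert e S0)) with hX
    have hXne : X.Nonempty := by
      obtain ⟨b, hb, hbc⟩ := hk i₀
      obtain ⟨f, hfb, hfS0, hfind⟩ := aug (hmatroid i₀) hS0ind (ind_of_mem hb)
        (by omega)
      refine ⟨f, ?_⟩
      rw [hX, Finset.mem_filter]
      exact ⟨Finset.mem_univ f, hfS0, hfind⟩
    obtain ⟨estar, hestarX, hestarmin⟩ :=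
      X.exists_min_image (fun e => c i₀ e (othersOn σ' i₀ e + 1)) hXne
    rw [hX, Finset.mem_filter] at hestarX
    obtain ⟨-, hestarS0, hestarInd⟩ := hestarX
    set Splus : Finset E := insert estar S0 with hSplus
    have hSpluscard : Splus.card = k i₀ := by
      rw [hSplus, Finset.card_insert_of_notMem hestarS0, hS0card]; omega
    -- the state space
    set W : (N → Finset E) → N → E → NNReal :=
      fun σ j e => c j e (β e + 1 - (if e ∈ σ j then 1 else 0)) with hW
    set A : Set ((N → Finset E) × E) := {p |
      (∀ j, Ind (𝒮 j) (p.1 j) ∧ (p.1 j).card = k j) ∧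
      (∀ e, numPlayersOn p.1 e = β e + (if e = p.2 then 1 else 0)) ∧
      (∀ j, ∀ T, Ind (𝒮 j) T → T.card = k j →
        ∑ e ∈ p.1 j, W p.1 j e ≤ ∑ e ∈ T, W p.1 j e)} with hA
    -- the initial state is in A
    have hmem0 : (Function.update σ' i₀ Splus, estar) ∈ A := by
      have hupd : ∀ j, Function.update σ' i₀ Splus j = if j = i₀ then Splus else σ' j := by
        intro j
        by_cases h : j = i₀
        · subst h; rw [Function.update_self, if_pos rfl]
        · rw [Function.update_of_ne h, if_neg h]
      refine ⟨?_, ?_, ?_⟩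
      · intro j
        dsimp only
        by_cases h : j = i₀
        · subst h
          rw [Function.update_self]
          exact ⟨hestarInd, hSpluscard⟩
        · rw [Function.update_of_ne h]
          refine ⟨(hσ'ic j).1, ?_⟩
          have := (hσ'ic j).2
          rwa [hk'def, Function.update_of_ne h] at this
      · intro e
        dsimp only
        rw [numPlayersOn_update]
        have hbe : β e = othersOn σ' i₀ e + (if e ∈ S0 then 1 else 0) := by
          rw [hβ]; exact numPlayersOn_split σ' i₀ e
        by_cases h : e = estar
        · subst h
          rw [if_pos rfl, if_pos (Finset.mem_insert_self _ _), if_neg hestarS0] at *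
          omega
        · have : (e ∈ Splus) ↔ (e ∈ S0) := by
            rw [hSplus, Finset.mem_insert]
            constructor
            · rintro (h' | h')
              · exact absurd h' h
              · exact h'
            · exact Or.inr
          rw [if_neg h]
          by_cases h2 : e ∈ S0
          · rw [if_pos (this.mpr h2), if_pos h2] at *; omega
          · rw [if_neg (fun hh => h2 (this.mp hh)), if_neg h2] at *; omega
      · intro j T hTind hTcard
        dsimp only
        by_cases h : i₀ = j
        · -- player i₀ : greedy step then weight-lowering
          subst h
          rw [Function.update_self]
          -- first, minimality w.r.t. u
          have humin : ∀ T', Ind (𝒮 i₀) T' → T'.card = k i₀ →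
              ∑ e ∈ Splus, c i₀ e (othersOn σ' i₀ e + 1) ≤
              ∑ e ∈ T', c i₀ e (othersOn σ' i₀ e + 1) := by
            intro T' hT'ind hT'card
            obtain ⟨f, hfT', hfS0, hfind⟩ := aug (hmatroid i₀) hS0ind hT'ind (by omega)
            have hfX : f ∈ X := by
              rw [hX]; simp only [Finset.mem_filter, Finset.mem_univ, true_and]
              exact ⟨hfS0, hfind⟩
            have h1 : ∑ e ∈ S0, c i₀ e (othersOn σ' i₀ e + 1) ≤
                ∑ e ∈ T'.erase f, c i₀ e (othersOn σ' i₀ e + 1) := by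
              apply hσ'opt i₀ (T'.erase f) (hT'ind.mono (Finset.erase_subset f T'))
              rw [Finset.card_erase_of_mem hfT', hT'card, hk'def, Function.update_self]
            have h2 : c i₀ estar (othersOn σ' i₀ estar + 1) ≤
                c i₀ f (othersOn σ' i₀ f + 1) := hestarmin f hfX
            calc ∑ e ∈ Splus, c i₀ e (othersOn σ' i₀ e + 1)
                = (∑ e ∈ S0, c i₀ e (othersOn σ' i₀ e + 1)) +
                  c i₀ estar (othersOn σ' i₀ estar + 1) := by
                  rw [hSplus, Finset.sum_insert hestarS0]; ring
              _ ≤ (∑ e ∈ T'.erase f, c i₀ e (othersOn σ' i₀ e + 1)) +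
                  c i₀ f (othersOn σ' i₀ f + 1) := add_le_add h1 h2
              _ = ∑ e ∈ T', c i₀ e (othersOn σ' i₀ e + 1) :=
                  Finset.sum_erase_add T' _ hfT'
          -- now lower the weight at estar
          have hres := min_of_lower
            (fun T' => Ind (𝒮 i₀) T' ∧ T'.card = k i₀)
            (fun e => c i₀ e (othersOn σ' i₀ e + 1))
            (W (Function.update σ' i₀ Splus) i₀) Splus estar
            (Finset.mem_insert_self _ _)
            (by
              rw [hW]
              simp only
              rw [Function.update_self, if_pos (Finset.mem_insert_self _ _)]
              have hoth : othersOn σ' i₀ estar = β estar := by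
                have := numPlayersOn_split σ' i₀ estar
                rw [if_neg hestarS0] at this
                rw [hβ]; omega
              rw [hoth]
              exact hc i₀ estar (by omega))
            (by
              intro e he
              rw [hW]
              simp only
              rw [Function.update_self]
              have hoth := numPlayersOn_split σ' i₀ e
              by_cases h2 : e ∈ S0
              · rw [if_pos (Finset.mem_insert_of_mem h2)]
                rw [if_pos h2] at hoth
                have : β e + 1 - 1 = othersOn σ' i₀ e + 1 := by rw [hβ]; omega
                rw [this]
              · rw [if_neg (by
                  rw [hSplus, Finset.mem_insert]
                  rintro (h' | h')
                  · exact he h'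
                  · exact h2 h')]
                rw [if_neg h2] at hoth
                have : β e + 1 - 0 = othersOn σ' i₀ e + 1 := by rw [hβ]; omega
                rw [this])
            (fun T' hT' => humin T' hT'.1 hT'.2)
          exact hres T ⟨hTind, hTcard⟩
        · -- other players : weights are unchanged
          have hne : j ≠ i₀ := fun hh => h hh.symm
          rw [Function.update_of_ne hne]
          have hwe : ∀ e, W (Function.update σ' i₀ Splus) j e =
              c j e (othersOn σ' j e + 1) := by
            intro e
            rw [hW]
            simp only
            rw [Function.update_of_ne hne]
            have hoth := numPlayersOn_split σ' j e
            by_cases h2 : e ∈ σ' j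
            · rw [if_pos h2] at hoth ⊢
              have heq2 : β e + 1 - 1 = othersOn σ' j e + 1 := by rw [hβ]; omega
              rw [heq2]
            · rw [if_neg h2] at hoth ⊢
              have heq2 : β e + 1 - 0 = othersOn σ' j e + 1 := by rw [hβ]; omega
              rw [heq2]
          rw [Finset.sum_congr rfl (fun e _ => hwe e), Finset.sum_congr rfl (fun e _ => hwe e)]
          apply hσ'opt j T hTind
          rw [hTcard, hk'def, Function.update_of_ne hne]
    -- choose a state minimizing the potential
    have hAfin : A.Finite := Set.toFinite A
    obtain ⟨p, hpA, hpmin⟩ := Set.exists_min_image A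
      (fun q => ∑ i, ∑ e ∈ q.1 i, c i e (β e + 1)) hAfin ⟨_, hmem0⟩
    obtain ⟨σb, tb⟩ := p
    obtain ⟨hbic, hbload, hbinv⟩ := hpA
    dsimp only at hbic hbload hbinv hpmin
    refine ⟨σb, hbic, ?_⟩
    intro j T₀ hT₀ind hT₀card
    by_contra hcon
    push_neg at hcon
    -- notation
    set u : E → NNReal := fun e => c j e (othersOn σb j e + 1) with hu
    set S : Finset E := σb j with hS
    have hSind : Ind (𝒮 j) S := (hbic j).1
    have hScard : S.card = k j := (hbic j).2
    have hinvj : ∀ T', Ind (𝒮 j) T' → T'.card = k j →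
        ∑ e ∈ S, W σb j e ≤ ∑ e ∈ T', W σb j e := fun T' h1 h2 => hbinv j T' h1 h2
    have keyarith : ∀ e, othersOn σb j e + (if e ∈ S then 1 else 0)
        = β e + (if e = tb then 1 else 0) := by
      intro e
      have h1 := numPlayersOn_split σb j e
      have h2 := hbload e
      rw [hS]
      omega
    have fact1 : ∀ e, e ≠ tb → u e = W σb j e := by
      intro e he
      have hke := keyarith e
      rw [if_neg he] at hke
      rw [hu, hW]
      simp only
      rw [← hS]
      by_cases h2 : e ∈ S
      · rw [if_pos h2] at hke ⊢
        have harg : othersOn σb j e + 1 = β e + 1 - 1 := by omega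
        rw [harg]
      · rw [if_neg h2] at hke ⊢
        have harg : othersOn σb j e + 1 = β e + 1 - 0 := by omega
        rw [harg]
    have fact2 : W σb j tb ≤ u tb := by
      have hke := keyarith tb
      rw [if_pos rfl] at hke
      rw [hu, hW]
      simp only
      rw [← hS]
      by_cases h2 : tb ∈ S
      · rw [if_pos h2] at hke ⊢
        exact hc j tb (by omega)
      · rw [if_neg h2] at hke ⊢
        exact hc j tb (by omega)
    have factle : ∀ e, W σb j e ≤ u e := by
      intro e
      by_cases h : e = tb
      · subst h; exact fact2
      · exact (fact1 e h).ge
    -- the token must belong to the unhappy player's strategy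
    have htbS : tb ∈ S := by
      by_contra htb
      have h1 : ∑ e ∈ S, u e = ∑ e ∈ S, W σb j e :=
        Finset.sum_congr rfl (fun e he => fact1 e (fun hh => htb (hh ▸ he)))
      have h2 : ∑ e ∈ S, W σb j e ≤ ∑ e ∈ T₀, W σb j e := hinvj T₀ hT₀ind hT₀card
      have h3 : ∑ e ∈ T₀, W σb j e ≤ ∑ e ∈ T₀, u e :=
        Finset.sum_le_sum (fun e _ => factle e)
      have h4 : ∑ e ∈ S, u e ≤ ∑ e ∈ T₀, u e := le_trans (le_trans h1.le h2) h3
      exact absurd hcon (not_lt.mpr h4)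
    -- a u-minimal strategy
    obtain ⟨T, hT, hTmin⟩ := Set.exists_min_image
      {T : Finset E | Ind (𝒮 j) T ∧ T.card = k j}
      (fun T => ∑ e ∈ T, u e) (Set.toFinite _) ⟨S, hSind, hScard⟩
    have hTlt : ∑ e ∈ T, u e < ∑ e ∈ S, u e :=
      lt_of_le_of_lt (hTmin T₀ ⟨hT₀ind, hT₀card⟩) hcon
    -- the token is not in T
    have htbT : tb ∉ T := by
      intro htbT
      have hd : W σb j tb + (u tb - W σb j tb) = u tb := add_tsub_cancel_of_le fact2
      have hSsum : ∑ e ∈ S, u e = (∑ e ∈ S, W σb j e) + (u tb - W σb j tb) := by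
        rw [← Finset.sum_erase_add S u htbS, ← Finset.sum_erase_add S (W σb j) htbS]
        rw [Finset.sum_congr rfl (fun e he => fact1 e (Finset.ne_of_mem_erase he))]
        rw [add_assoc, hd]
      have hTsum : ∑ e ∈ T, u e = (∑ e ∈ T, W σb j e) + (u tb - W σb j tb) := by
        rw [← Finset.sum_erase_add T u htbT, ← Finset.sum_erase_add T (W σb j) htbT]
        rw [Finset.sum_congr rfl (fun e he => fact1 e (Finset.ne_of_mem_erase he))]
        rw [add_assoc, hd]
      have h2 : ∑ e ∈ S, W σb j e ≤ ∑ e ∈ T, W σb j e := hinvj T hT.1 hT.2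
      rw [hSsum, hTsum] at hTlt
      exact absurd (add_le_add_left h2 _) (not_le.mpr hTlt)
    -- symmetric exchange
    obtain ⟨f, hfT, hfS, hindS1, hindT1⟩ := sym_exchange (hmatroid j) hSind hT.1
      (by rw [hScard, hT.2]) htbS htbT
    have hftb : f ≠ tb := fun h => hfS (h ▸ htbS)
    have hkj1 : 1 ≤ k j := by
      rw [← hScard]
      exact Finset.card_pos.mpr ⟨tb, htbS⟩
    set S1 : Finset E := insert f (S.erase tb) with hS1
    have hfSe : f ∉ S.erase tb := fun h => hfS (Finset.mem_of_mem_erase h)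
    have hS1card : S1.card = k j := by
      rw [hS1, Finset.card_insert_of_notMem hfSe, Finset.card_erase_of_mem htbS, hScard]
      omega
    have htbS1 : tb ∉ S1 := by
      rw [hS1, Finset.mem_insert]
      rintro (h' | h')
      · exact hftb h'.symm
      · exact (Finset.notMem_erase tb S) h'
    have htbT1 : tb ∉ T.erase f := fun h => htbT (Finset.mem_of_mem_erase h)
    have hT1card : (insert tb (T.erase f)).card = k j := by
      rw [Finset.card_insert_of_notMem htbT1, Finset.card_erase_of_mem hfT, hT.2]
      omega
    -- key inequality from the invariant applied to insert tb (T.erase f)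
    have hb1 : ∑ e ∈ S, W σb j e ≤ ∑ e ∈ insert tb (T.erase f), W σb j e :=
      hinvj (insert tb (T.erase f)) hindT1 hT1card
    have hkey : ∑ e ∈ S.erase tb, W σb j e ≤ ∑ e ∈ T.erase f, W σb j e := by
      rw [← Finset.sum_erase_add S (W σb j) htbS] at hb1
      rw [Finset.sum_insert htbT1] at hb1
      rw [add_comm (W σb j tb)] at hb1
      exact le_of_add_le_add_right hb1
    have hkeyu : ∑ e ∈ S.erase tb, u e ≤ ∑ e ∈ T.erase f, u e := by
      rw [Finset.sum_congr rfl (fun e he => fact1 e (Finset.ne_of_mem_erase he)),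
        Finset.sum_congr rfl (fun e (he : e ∈ T.erase f) => fact1 e
          (fun hh => htbT (Finset.mem_of_mem_erase (hh ▸ he))))]
      exact hkey
    have hS1u : ∑ e ∈ S1, u e ≤ ∑ e ∈ T, u e := by
      rw [hS1, Finset.sum_insert hfSe]
      calc u f + ∑ e ∈ S.erase tb, u e ≤ u f + ∑ e ∈ T.erase f, u e :=
            add_le_add_right hkeyu _
        _ = ∑ e ∈ T.erase f, u e + u f := by ring
        _ = ∑ e ∈ T, u e := Finset.sum_erase_add T u hfT
    have hSsum2 : ∑ e ∈ S, u e = ∑ e ∈ S.erase tb, u e + u tb :=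
      (Finset.sum_erase_add S u htbS).symm
    have hufu : u f < u tb := by
      have h1 : ∑ e ∈ S1, u e < ∑ e ∈ S, u e := lt_of_le_of_lt hS1u hTlt
      rw [hS1, Finset.sum_insert hfSe, hSsum2, add_comm (u f)] at h1
      exact lt_of_add_lt_add_left h1
    -- facts about u at f and tb
    have hfS' : f ∉ S := hfS
    have huf : u f = c j f (β f + 1) := by
      have hke := keyarith f
      rw [if_neg hfS', if_neg hftb] at hke
      rw [hu]; simp only
      have harg : othersOn σb j f + 1 = β f + 1 := by omega
      rw [harg]
    have hutb : u tb = c j tb (β tb + 1) := by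
      have hke := keyarith tb
      rw [if_pos htbS, if_pos rfl] at hke
      rw [hu]; simp only
      have harg : othersOn σb j tb + 1 = β tb + 1 := by omega
      rw [harg]
    -- the new state is in A
    have hp1A : (Function.update σb j S1, f) ∈ A := by
      refine ⟨?_, ?_, ?_⟩
      · intro i
        dsimp only
        by_cases h : i = j
        · subst h
          rw [Function.update_self]
          exact ⟨hindS1, hS1card⟩
        · rw [Function.update_of_ne h]
          exact hbic i
      · intro e
        dsimp only
        rw [numPlayersOn_update]
        have hke := keyarith e
        by_cases he1 : e = tb
        · subst he1
          rw [if_neg htbS1, if_neg (Ne.symm hftb)]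
          rw [if_pos htbS, if_pos rfl] at hke
          omega
        · by_cases he2 : e = f
          · subst he2
            rw [if_pos (Finset.mem_insert_self _ _), if_pos rfl]
            rw [if_neg hfS', if_neg he1] at hke
            omega
          · have hiff : (e ∈ S1) ↔ (e ∈ S) := by
              rw [hS1, Finset.mem_insert, Finset.mem_erase]
              constructor
              · rintro (h' | h')
                · exact absurd h' he2
                · exact h'.2
              · exact fun h' => Or.inr ⟨he1, h'⟩
            rw [if_neg he2]
            rw [if_neg he1] at hke
            by_cases h3 : e ∈ S
            · rw [if_pos (hiff.mpr h3)]
              rw [if_pos h3] at hke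
              omega
            · rw [if_neg (fun hh => h3 (hiff.mp hh))]
              rw [if_neg h3] at hke
              omega
      · intro i T' hT'ind hT'card
        dsimp only
        by_cases h : i = j
        · subst h
          rw [Function.update_self]
          have husmin : ∀ T'', Ind (𝒮 i) T'' → T''.card = k i →
              ∑ e ∈ S1, u e ≤ ∑ e ∈ T'', u e := by
            intro T'' h1 h2
            exact le_trans hS1u (hTmin T'' ⟨h1, h2⟩)
          have hres := min_of_lower (fun T'' => Ind (𝒮 i) T'' ∧ T''.card = k i)
            u (W (Function.update σb i S1) i) S1 f (Finset.mem_insert_self _ _)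
            (by
              rw [hW]; simp only
              rw [Function.update_self, if_pos (Finset.mem_insert_self _ _), huf]
              exact hc i f (by omega))
            (by
              intro e he
              rw [hW]; simp only
              rw [Function.update_self]
              by_cases he1 : e = tb
              · subst he1
                rw [if_neg htbS1, hutb, Nat.sub_zero]
              · rw [fact1 e he1, hW]
                simp only
                rw [← hS]
                have hiff : (e ∈ S1) ↔ (e ∈ S) := by
                  rw [hS1, Finset.mem_insert, Finset.mem_erase]
                  constructor
                  · rintro (h' | h')
                    · exact absurd h' he
                    · exact h'.2
                  · exact fun h' => Or.inr ⟨he1, h'⟩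
                by_cases h3 : e ∈ S
                · rw [if_pos (hiff.mpr h3), if_pos h3]
                · rw [if_neg (fun hh => h3 (hiff.mp hh)), if_neg h3])
            (fun T'' hT'' => husmin T'' hT''.1 hT''.2)
          exact hres T' ⟨hT'ind, hT'card⟩
        · rw [Function.update_of_ne h]
          have hwe : ∀ e, W (Function.update σb j S1) i e = W σb i e := by
            intro e
            rw [hW]
            simp only
            rw [Function.update_of_ne h]
          rw [Finset.sum_congr rfl (fun e _ => hwe e),
            Finset.sum_congr rfl (fun e _ => hwe e)]
          exact hbinv i T' hT'ind hT'card
    -- the potential strictly decreases : contradiction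
    have hdec : ∑ i, ∑ e ∈ Function.update σb j S1 i, c i e (β e + 1) <
        ∑ i, ∑ e ∈ σb i, c i e (β e + 1) := by
      apply Finset.sum_lt_sum
      · intro i _
        by_cases h : i = j
        · subst h
          rw [Function.update_self, ← hS]
          rw [hS1, Finset.sum_insert hfSe,
            ← Finset.sum_erase_add S (fun e => c i e (β e + 1)) htbS]
          rw [add_comm (∑ e ∈ S.erase tb, c i e (β e + 1))]
          apply add_le_add_left
          rw [← huf, ← hutb]
          exact le_of_lt hufu
        · rw [Function.update_of_ne h]
      · refine ⟨j, Finset.mem_univ j, ?_⟩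
        rw [Function.update_self, ← hS]
        rw [hS1, Finset.sum_insert hfSe,
          ← Finset.sum_erase_add S (fun e => c j e (β e + 1)) htbS]
        rw [add_comm (∑ e ∈ S.erase tb, c j e (β e + 1))]
        apply add_lt_add_left
        rw [← huf, ← hutb]
        exact hufu
    exact absurd (hpmin _ hp1A) (not_le.mpr hdec)

end PNEgame

open PNEaux PNEgame

/-- Every player-specific matroid congestion game with mixed costs in which
`α_i ∈ {0,1}` for each player `i` has a pure Nash equilibrium. -/
theorem player_specific_matroid_congestion_game_mixed_costs_zero_one_has_PNE
    {N E : Type*} [Fintype N] [DecidableEq N] [Fintype E] [DecidableEq E]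
    (𝒮 : N → Finset (Finset E)) (hmatroid : ∀ i, IsBaseFamily (𝒮 i))
    (ℓ b : N → E → ℕ → NNReal)
    (hℓ : ∀ i e, Monotone (ℓ i e)) (hb : ∀ i e, Monotone (b i e))
    (α : N → NNReal) (hα : ∀ i, α i = 0 ∨ α i = 1) :
    ∃ σ : N → Finset E, (∀ i, σ i ∈ 𝒮 i) ∧
      ∀ i : N, ∀ S' ∈ 𝒮 i,
        psMixedCost ℓ b α σ i ≤ psMixedCost ℓ b α (Function.update σ i S') i := by
  classical
  have hbase : ∀ i, ∃ bb, bb ∈ 𝒮 i := fun i => (hmatroid i).1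
  choose b0 hb0 using hbase
  set k : N → ℕ := fun i => (b0 i).card with hk
  set Wv : N → Finset NNReal := fun i => Finset.image
      (fun p : E × Fin (Fintype.card N + 1) => b i p.1 p.2.1) Finset.univ with hWv
  set C : NNReal := ((Fintype.card E + 1 : ℕ) : NNReal) with hC
  have hC1 : (1 : NNReal) ≤ C := by
    rw [hC]
    exact_mod_cast Nat.one_le_iff_ne_zero.mpr (by omega)
  have hC0 : (0 : NNReal) < C := lt_of_lt_of_le zero_lt_one hC1
  set φ : N → NNReal → NNReal :=
    fun i v => C ^ ((Wv i).filter (fun w => w ≤ v)).card with hφ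
  have hφmono : ∀ i, Monotone (φ i) := by
    intro i v v' hvv'
    rw [hφ]
    apply pow_le_pow_right₀ hC1
    apply Finset.card_le_card
    intro x hx
    rw [Finset.mem_filter] at hx ⊢
    exact ⟨hx.1, le_trans hx.2 hvv'⟩
  set c : N → E → ℕ → NNReal :=
    fun i => if α i = 0 then (fun e m => φ i (b i e m)) else ℓ i with hcdef
  have hcmono : ∀ i e, Monotone (c i e) := by
    intro i e
    by_cases h : α i = 0
    · simp only [hcdef, if_pos h]
      exact fun m m' hm => hφmono i (hb i e hm)
    · simp only [hcdef, if_neg h]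
      exact hℓ i e
  obtain ⟨σ, hσ1, hσ2⟩ := PNEgame.stage 𝒮 hmatroid c hcmono (∑ i, k i) k rfl
    (fun i => ⟨b0 i, hb0 i, le_refl _⟩)
  have hbases : ∀ i, σ i ∈ 𝒮 i := by
    intro i
    obtain ⟨bb, hbb, hsub⟩ := (hσ1 i).1
    have h1 : bb.card = k i := base_card_eq (hmatroid i) bb hbb (b0 i) (hb0 i)
    have h2 : σ i = bb := Finset.eq_of_subset_of_card_le hsub (by
      rw [h1, (hσ1 i).2])
    rw [h2]
    exact hbb
  refine ⟨σ, hbases, ?_⟩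
  intro i S' hS'
  have hcardS' : S'.card = k i := base_card_eq (hmatroid i) S' hS' (b0 i) (hb0 i)
  have hopt := hσ2 i S' (ind_of_mem hS') hcardS'
  have hnum1 : ∀ e ∈ σ i, numPlayersOn σ e = othersOn σ i e + 1 := by
    intro e he
    rw [numPlayersOn_split σ i e, if_pos he]
  have hnum2 : ∀ e ∈ S', numPlayersOn (Function.update σ i S') e = othersOn σ i e + 1 := by
    intro e he
    rw [numPlayersOn_update σ i S' e, if_pos he]
  have hupdi : Function.update σ i S' i = S' := Function.update_self i S' σ
  rcases hα i with h0 | h1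
  · -- bottleneck player
    rw [psMixedCost, psMixedCost, h0, hupdi]
    simp only [zero_mul, tsub_zero, zero_add, one_mul]
    apply Finset.sup_le
    intro e0 he0
    by_contra hv
    push_neg at hv
    set v0 : NNReal := b i e0 (numPlayersOn σ e0) with hv0
    set M : NNReal := S'.sup (fun e => b i e (numPlayersOn (Function.update σ i S') e)) with hM
    -- v0 belongs to the value set
    have hNle : numPlayersOn σ e0 < Fintype.card N + 1 := by
      have : numPlayersOn σ e0 ≤ Fintype.card N := by
        rw [numPlayersOn, ← Finset.card_univ]
        exact Finset.card_filter_le _ _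
      omega
    have hv0Wv : v0 ∈ Wv i := by
      rw [hWv]
      exact Finset.mem_image.mpr ⟨(e0, ⟨numPlayersOn σ e0, hNle⟩), Finset.mem_univ _, rfl⟩
    set av : ℕ := ((Wv i).filter (fun w => w ≤ v0)).card with hav
    have hav1 : 1 ≤ av := by
      rw [hav]
      exact Finset.card_pos.mpr ⟨v0, Finset.mem_filter.mpr ⟨hv0Wv, le_refl v0⟩⟩
    -- each deviation value is strictly smaller than v0
    have hterm : ∀ e ∈ S', φ i (b i e (othersOn σ i e + 1)) ≤ C ^ (av - 1) := by
      intro e he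
      have hwe : b i e (othersOn σ i e + 1) < v0 := by
        have h1 : b i e (othersOn σ i e + 1) ≤ M := by
          rw [hM, ← hnum2 e he]
          exact Finset.le_sup (f := fun e' => b i e' (numPlayersOn (Function.update σ i S') e')) he
        exact lt_of_le_of_lt h1 hv
      have hsub : insert v0 ((Wv i).filter (fun w => w ≤ b i e (othersOn σ i e + 1)))
          ⊆ (Wv i).filter (fun w => w ≤ v0) := by
        intro x hx
        rcases Finset.mem_insert.mp hx with h' | h'
        · subst h'
          exact Finset.mem_filter.mpr ⟨hv0Wv, le_refl _⟩
        · rw [Finset.mem_filter] at h' ⊢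
          exact ⟨h'.1, le_trans h'.2 (le_of_lt hwe)⟩
      have hnotmem : v0 ∉ (Wv i).filter (fun w => w ≤ b i e (othersOn σ i e + 1)) := by
        intro h'
        exact absurd ((Finset.mem_filter.mp h').2) (not_le.mpr hwe)
      have hcardle : ((Wv i).filter (fun w => w ≤ b i e (othersOn σ i e + 1))).card + 1 ≤ av := by
        rw [hav]
        calc ((Wv i).filter (fun w => w ≤ b i e (othersOn σ i e + 1))).card + 1
            = (insert v0 ((Wv i).filter (fun w => w ≤ b i e (othersOn σ i e + 1)))).card := by
              rw [Finset.card_insert_of_notMem hnotmem]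
          _ ≤ _ := Finset.card_le_card hsub
      rw [hφ]
      exact pow_le_pow_right₀ hC1 (by omega)
    -- the sum over the deviation is < φ i v0, while the sum over σ i is ≥ φ i v0
    have hsumS' : ∑ e ∈ S', φ i (b i e (othersOn σ i e + 1)) < C ^ av := by
      calc ∑ e ∈ S', φ i (b i e (othersOn σ i e + 1))
          ≤ S'.card • C ^ (av - 1) := Finset.sum_le_card_nsmul _ _ _ (fun e he => hterm e he)
        _ = (S'.card : NNReal) * C ^ (av - 1) := nsmul_eq_mul _ _
        _ < C * C ^ (av - 1) := by
            apply mul_lt_mul_of_pos_right _ (pow_pos hC0 _)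
            rw [hC]
            exact_mod_cast lt_of_le_of_lt (Finset.card_le_univ S') (by omega)
        _ = C ^ av := by
            rw [← pow_succ']
            congr 1
            omega
    have hsumσ : C ^ av ≤ ∑ e ∈ σ i, φ i (b i e (numPlayersOn σ e)) := by
      have := Finset.single_le_sum
        (f := fun e => φ i (b i e (numPlayersOn σ e))) (fun e _ => zero_le) he0
      calc C ^ av = φ i v0 := by rw [hφ, hav]
        _ ≤ _ := this
    -- rewrite hopt with the bottleneck cost function
    have hceq : ∀ e (m : ℕ), c i e m = φ i (b i e m) := by
      intro e m
      simp only [hcdef, if_pos h0]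
    have hopt' : ∑ e ∈ σ i, φ i (b i e (numPlayersOn σ e)) ≤
        ∑ e ∈ S', φ i (b i e (othersOn σ i e + 1)) := by
      calc ∑ e ∈ σ i, φ i (b i e (numPlayersOn σ e))
          = ∑ e ∈ σ i, c i e (othersOn σ i e + 1) :=
            Finset.sum_congr rfl (fun e he => by rw [hceq, hnum1 e he])
        _ ≤ ∑ e ∈ S', c i e (othersOn σ i e + 1) := hopt
        _ = ∑ e ∈ S', φ i (b i e (othersOn σ i e + 1)) :=
            Finset.sum_congr rfl (fun e he => by rw [hceq])
    exact absurd (le_trans hsumσ hopt') (not_le.mpr hsumS')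
  · -- sum player
    rw [psMixedCost, psMixedCost, h1, hupdi]
    simp only [tsub_self, zero_mul, add_zero, one_mul]
    have hceq : ∀ e (m : ℕ), c i e m = ℓ i e m := by
      intro e m
      simp only [hcdef, if_neg (show ¬ α i = 0 by rw [h1]; exact one_ne_zero)]
    calc ∑ e ∈ σ i, ℓ i e (numPlayersOn σ e)
        = ∑ e ∈ σ i, c i e (othersOn σ i e + 1) :=
          Finset.sum_congr rfl (fun e he => by rw [hceq, hnum1 e he])
      _ ≤ ∑ e ∈ S', c i e (othersOn σ i e + 1) := hopt
      _ = ∑ e ∈ S', ℓ i e (numPlayersOn (Function.update σ i S') e) :=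
          Finset.sum_congr rfl (fun e he => by rw [hceq, hnum2 e he])
end
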